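/- arXiv:2112.02251 — 4 statements merged into one kernel-verified Lean document; each statement's English description precedes it below -/
import Mathlib

section
/- For positive integers a, b, m and 1 ≤ j ≤ a+(m−1)b, the number of (a,b)-parking functions π of length m with π₁ = j equals ab·∑_{s : a+sb ≥ j, 0 ≤ s ≤ m−1} binom(m−1, s)·(a+sb)^(s−1)·((m−s)b)^(m−2−s). In particular this count is the same for all j ≤ a. -/
open Finset

def IsParkingFn {m : ℕ} (u : Fin m → ℕ) (π : Fin m → ℕ) : Prop :=
  (∀ i, 0 < π i) ∧ ∃ σ : Equiv.Perm (Fin m),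
    Monotone (fun i => π (σ i)) ∧ ∀ i, π (σ i) ≤ u i

def GoodCnt (α β n : ℕ) (π : Fin n → ℕ) : Prop :=
  ∀ k < n, k + 1 ≤ (univ.filter fun i : Fin n => π i ≤ α + k * β).card

instance (α β n : ℕ) (π : Fin n → ℕ) : Decidable (GoodCnt α β n π) := by
  unfold GoodCnt; infer_instance

def PFfin (α β n : ℕ) : Finset (Fin n → ℕ) :=
  (Fintype.piFinset fun _ : Fin n => Finset.Icc 1 (α + n * β)).filter (GoodCnt α β n)

def Tw (S : ℕ → ℤ) (x : ℕ) : ℤ := ∑ q ∈ range x, S q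

def CGood (N : ℕ) (S : ℕ → ℤ) (t : ℕ) : Prop := ∀ k, t < k → k ≤ t + N → Tw S t < Tw S k

instance (N : ℕ) (S : ℕ → ℤ) (t : ℕ) : Decidable (CGood N S t) := by
  have : CGood N S t ↔ ∀ k ∈ Finset.Ioc t (t+N), Tw S t < Tw S k := by
    constructor
    · intro h k hk; rw [Finset.mem_Ioc] at hk; exact h k hk.1 hk.2
    · intro h k h1 h2; exact h k (Finset.mem_Ioc.mpr ⟨h1, h2⟩)
  exact decidable_of_iff' _ this

def Es (a b m : ℕ) (hm : 0 < m) (π : Fin m → ℕ) (t : ℕ) : ℕ :=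
  (univ.filter fun i : Fin m => i ≠ ⟨0, hm⟩ ∧ π i ≤ a + t * b).card

def Cond (a b m j : ℕ) (hm : 0 < m) (π : Fin m → ℕ) (s : ℕ) : Prop :=
  (∀ i, 1 ≤ π i) ∧ π ⟨0, hm⟩ = j ∧ Es a b m hm π s = s ∧
    (∀ k < s, k + 1 ≤ Es a b m hm π k) ∧
    (∀ k < m - 1 - s, k + 1 ≤ (univ.filter fun i : Fin m =>
      i ≠ ⟨0, hm⟩ ∧ a + s * b < π i ∧ π i ≤ a + s * b + (b + k * b)).card)

instance (a b m j : ℕ) (hm : 0 < m) (π : Fin m → ℕ) (s : ℕ) :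
    Decidable (Cond a b m j hm π s) := by
  unfold Cond; infer_instance

def SplitSet (a b m j : ℕ) (hm : 0 < m) (s : ℕ) : Finset (Fin m → ℕ) :=
  (Fintype.piFinset fun _ : Fin m => Finset.Icc 1 (a + m * b)).filter
    (fun π => Cond a b m j hm π s)


-- from t1.lean
lemma filter_comp_perm_card {n : ℕ} (σ : Equiv.Perm (Fin n)) (p : Fin n → Prop)
    [DecidablePred p] :
    (univ.filter fun i => p (σ i)).card = (univ.filter p).card := by
  apply Finset.card_bij (fun i _ => σ i)
  · intro i hi; simp_all
  · intro i _ i' _ h; exact σ.injective h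
  · intro j hj; exact ⟨σ.symm j, by simp_all, by simp⟩

lemma parking_iff {m : ℕ} (a b : ℕ) (π : Fin m → ℕ) :
    IsParkingFn (fun i : Fin m => a + i.val * b) π ↔
      (∀ i, 0 < π i) ∧ GoodCnt a b m π := by
  constructor
  · rintro ⟨hpos, σ, hmono, hle⟩
    refine ⟨hpos, fun k hk => ?_⟩
    have hsub : (Finset.Iic (⟨k, hk⟩ : Fin m)).image σ ⊆
        univ.filter fun i => π i ≤ a + k * b := by
      intro j hj
      simp only [Finset.mem_image, Finset.mem_Iic] at hj
      obtain ⟨i, hi, rfl⟩ := hj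
      simp only [Finset.mem_filter, Finset.mem_univ, true_and]
      calc π (σ i) ≤ π (σ ⟨k, hk⟩) := hmono hi
        _ ≤ a + k * b := hle _
    calc k + 1 = (Finset.Iic (⟨k, hk⟩ : Fin m)).card := by
          rw [Fin.card_Iic]
      _ = ((Finset.Iic (⟨k, hk⟩ : Fin m)).image σ).card :=
          (Finset.card_image_of_injective _ σ.injective).symm
      _ ≤ _ := Finset.card_le_card hsub
  · rintro ⟨hpos, hg⟩
    refine ⟨hpos, Tuple.sort π, Tuple.monotone_sort π, fun i => ?_⟩
    have h1 := hg i.val i.isLt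
    rw [← filter_comp_perm_card (Tuple.sort π)] at h1
    by_contra hcon
    push_neg at hcon
    have hsub : (univ.filter fun jj => π (Tuple.sort π jj) ≤ a + i.val * b) ⊆
        univ.filter fun jj : Fin m => jj < i := by
      intro jj hjj
      simp only [Finset.mem_filter, Finset.mem_univ, true_and] at hjj ⊢
      by_contra hge
      push_neg at hge
      exact absurd (le_trans (Tuple.monotone_sort π hge) hjj) (not_le.mpr hcon)
    have := Finset.card_le_card hsub
    have hcard : (univ.filter fun jj : Fin m => jj < i).card = i.val := by
      have : (univ.filter fun jj : Fin m => jj < i) = Finset.Iio i := by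
        ext x; simp
      rw [this, Fin.card_Iio]
    omega

-- from t2.lean
section CycleLemma

variable (N a : ℕ) (S : ℕ → ℤ)

theorem cycle_lemma (hN : 0 < N) (ha : 0 < a)
    (hper : ∀ x, S (x + N) = S x) (hle : ∀ x, S x ≤ 1)
    (htot : Tw S N = a) :
    ((range N).filter (CGood N S)).card = a := by
  set T := Tw S with hT
  have hstep : ∀ x, T (x + 1) = T x + S x := by
    intro x; simp [hT, Tw, Finset.sum_range_succ]
  have hstep1 : ∀ x, T (x + 1) ≤ T x + 1 := fun x => by
    rw [hstep]; linarith [hle x]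
  have hperiod : ∀ x, T (x + N) = T x + a := by
    intro x
    induction x with
    | zero => simpa [hT, Tw] using htot
    | succ n ih =>
      have : n + 1 + N = (n + N) + 1 := by ring
      rw [this, hstep, ih, hper, hstep]; ring
  have hT0 : T 0 = 0 := by simp [hT, Tw]
  -- min of T over range N
  have hne : ((range N).image T).Nonempty := by
    refine Finset.Nonempty.image ?_ _
    exact ⟨0, Finset.mem_range.mpr hN⟩
  set m : ℤ := ((range N).image T).min' hne with hm
  have hm_le : ∀ k < N, m ≤ T k := by
    intro k hk
    exact Finset.min'_le _ _ (Finset.mem_image_of_mem _ (Finset.mem_range.mpr hk))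
  obtain ⟨kstar, hkstar, hkstarT⟩ : ∃ k, k < N ∧ T k = m := by
    obtain ⟨x, hx, hxT⟩ := Finset.mem_image.mp (Finset.min'_mem _ hne)
    exact ⟨x, Finset.mem_range.mp hx, hxT⟩
  have hm0 : m ≤ 0 := by rw [← hT0]; exact hm_le 0 hN
  -- T (N-1) ≥ a - 1
  have hTN1 : (a : ℤ) - 1 ≤ T (N - 1) := by
    have := hstep1 (N - 1)
    have hNeq : N - 1 + 1 = N := Nat.succ_pred_eq_of_pos hN
    rw [hNeq] at this
    rw [htot] at this; omega
  -- the selector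
  have hfilt_ne : ∀ v : ℤ, m ≤ v → ((range N).filter (fun k => T k ≤ v)).Nonempty := by
    intro v hv
    exact ⟨kstar, Finset.mem_filter.mpr ⟨Finset.mem_range.mpr hkstar, by omega⟩⟩
  set f : ℤ → ℕ := fun v =>
    if h : m ≤ v then ((range N).filter (fun k => T k ≤ v)).max' (hfilt_ne v h) else 0
    with hf
  have hf_spec : ∀ v : ℤ, m ≤ v → v ≤ T (N - 1) →
      f v < N ∧ T (f v) = v ∧ (∀ k, f v < k → k < N → v < T k) := by
    intro v hv hv2
    have hmem := Finset.max'_mem _ (hfilt_ne v hv)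
    rw [Finset.mem_filter, Finset.mem_range] at hmem
    have hfv : f v = ((range N).filter (fun k => T k ≤ v)).max' (hfilt_ne v hv) := by
      rw [hf]; simp [hv]
    have hlt : f v < N := by rw [hfv]; exact hmem.1
    have hTle : T (f v) ≤ v := by rw [hfv]; exact hmem.2
    have hmax : ∀ k, f v < k → k < N → v < T k := by
      intro k hk hkN
      by_contra hcon
      push_neg at hcon
      have : k ≤ f v := by
        rw [hfv]
        exact Finset.le_max' _ _ (Finset.mem_filter.mpr ⟨Finset.mem_range.mpr hkN, hcon⟩)
      omega
    refine ⟨hlt, ?_, hmax⟩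
    rcases Nat.lt_or_ge (f v) (N - 1) with h | h
    · have h2 := hmax (f v + 1) (Nat.lt_succ_self _) (by omega)
      have := hstep1 (f v)
      omega
    · have : f v = N - 1 := by omega
      rw [this]
      have : ¬ v < T (N - 1) ∨ v = T (N-1) := by
        by_cases hc : T (N-1) ≤ v
        · left; omega
        · exfalso
          -- N-1 not in filter, but is f v
          rw [this] at hTle; omega
      omega
  -- Good iff characterization for t < N
  have hgood_iff : ∀ t < N, CGood N S t ↔
      ((∀ k, t < k → k < N → T t < T k) ∧ ∀ k ≤ t, T t < T k + a) := by
    intro t ht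
    constructor
    · intro hg
      constructor
      · intro k hk hkN; exact hg k hk (by omega)
      · intro k hk
        have h3 : T t < T (k + N) := hg (k + N) (by omega) (by omega)
        rw [hperiod] at h3; omega
    · rintro ⟨h1, h2⟩ k hk hkN
      rcases Nat.lt_or_ge k N with h | h
      · show T t < T k
        exact h1 k hk h
      · have hk2 : k - N ≤ t := by omega
        have h4 := h2 (k - N) hk2
        have h5 : T (k - N) + a = T k := by
          rw [← hperiod (k - N)]; congr 1; omega
        show T t < T k
        omega
  -- bijection
  rw [show a = (Finset.Icc m (m + a - 1)).card by
    rw [Int.card_Icc]; simp]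
  symm
  apply Finset.card_bij (fun v _ => f v)
  · -- maps to
    intro v hv
    rw [Finset.mem_Icc] at hv
    obtain ⟨h1, h2, h3⟩ := hf_spec v hv.1 (by omega)
    rw [Finset.mem_filter, Finset.mem_range]
    refine ⟨h1, ?_⟩
    rw [hgood_iff _ h1]
    constructor
    · intro k hk hkN; rw [h2]; exact h3 k hk hkN
    · intro k hk
      have : m ≤ T k := hm_le k (by omega)
      omega
  · -- injective
    intro v hv v' hv' heq
    rw [Finset.mem_Icc] at hv hv'
    have e1 := (hf_spec v hv.1 (by omega)).2.1
    have e2 := (hf_spec v' hv'.1 (by omega)).2.1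
    rw [heq] at e1; omega
  · -- surjective
    intro t ht
    rw [Finset.mem_filter, Finset.mem_range] at ht
    obtain ⟨htN, hg⟩ := ht
    rw [hgood_iff _ htN] at hg
    obtain ⟨h1, h2⟩ := hg
    have hTtm : m ≤ T t := hm_le t htN
    have hTtub : T t ≤ m + a - 1 := by
      rcases Nat.lt_or_ge kstar t with h | h
      · have := h2 kstar (by omega); omega
      · rcases Nat.eq_or_lt_of_le h with h' | h'
        · subst h'; omega
        · have := h1 kstar h' hkstar; omega
    refine ⟨T t, Finset.mem_Icc.mpr ⟨hTtm, hTtub⟩, ?_⟩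
    -- f (T t) = t
    obtain ⟨hfN, hfT, hfmax⟩ := hf_spec (T t) hTtm (by omega)
    by_contra hne'
    rcases Nat.lt_or_ge (f (T t)) t with h | h
    · -- t in filter, greater than max: contradiction with maximality
      have := hfmax t h htN; omega
    · have hlt : t < f (T t) := by omega
      have := h1 (f (T t)) hlt hfN
      omega
  done

end CycleLemma

-- from t3.lean
lemma filter_comp_equiv_card {α : Type*} [Fintype α] [DecidableEq α] (e : α ≃ α)
    (p : α → Prop) [DecidablePred p] :
    (univ.filter fun i => p (e i)).card = (univ.filter p).card := by
  apply Finset.card_bij (fun i _ => e i)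
  · intro i hi; simp_all
  · intro i _ i' _ h; exact e.injective h
  · intro j hj; exact ⟨e.symm j, by simp_all, by simp⟩

lemma val_neg_sub_one {N : ℕ} [NeZero N] (z : ZMod N) :
    (-z - 1).val = N - 1 - z.val := by
  have hN : 0 < N := Nat.pos_of_ne_zero (NeZero.ne N)
  obtain ⟨M, rfl⟩ : ∃ M, N = M + 1 := ⟨N - 1, by omega⟩
  have h1 : z + (-z - 1) = -1 := by ring
  have h2 : ((-1 : ZMod (M+1))).val = M := ZMod.val_neg_one M
  have h3 : (z + (-z - 1)).val = (z.val + (-z - 1).val) % (M+1) := ZMod.val_add _ _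
  have h4 : z.val < M + 1 := ZMod.val_lt z
  have h5 : (-z - 1).val < M + 1 := ZMod.val_lt _
  rw [h1, h2] at h3
  rcases Nat.lt_or_ge (z.val + (-z - 1).val) (M+1) with h | h
  · rw [Nat.mod_eq_of_lt h] at h3; omega
  · have hlt : z.val + (-z - 1).val - (M+1) < M+1 := by omega
    rw [Nat.mod_eq_sub_mod h, Nat.mod_eq_of_lt hlt] at h3
    omega

-- from t4.lean
section patt

variable {a b n N : ℕ} [NeZero N]

lemma fiber_count (x : ℕ) (hx : x ≤ N) (c : Fin n → ZMod N) (t : ℕ) :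
    (univ.filter fun i => (c i - (t : ZMod N)).val < x).card
      = ∑ q ∈ range x, (univ.filter fun i => c i = ((t + q : ℕ) : ZMod N)).card := by
  rw [Finset.card_eq_sum_card_fiberwise
    (f := fun i => (c i - (t : ZMod N)).val) (t := range x)
    (fun i hi => by rw [Finset.mem_coe, Finset.mem_filter] at hi; exact Finset.mem_coe.mpr (Finset.mem_range.mpr hi.2))]
  apply Finset.sum_congr rfl
  intro q hq
  rw [Finset.mem_range] at hq
  congr 1
  ext i
  simp only [Finset.mem_filter, Finset.mem_univ, true_and]
  constructor
  · rintro ⟨h1, h2⟩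
    have : c i - (t : ZMod N) = (q : ZMod N) := by
      rw [← h2]; exact (ZMod.natCast_rightInverse _).symm
    push_cast
    rw [← this]; ring
  · intro h
    have h2 : c i - (t : ZMod N) = (q : ZMod N) := by
      rw [h]; push_cast; ring
    have h3 : (c i - (t : ZMod N)).val = q := by
      rw [h2]; exact ZMod.val_cast_of_lt (lt_of_lt_of_le hq hx)
    exact ⟨by omega, h3⟩

end patt

-- from t5.lean
lemma patt_count (a b n N : ℕ) (ha : 0 < a) (hb : 0 < b) (hn : 0 < n)
    (hN : N = a + n * b) [NeZero N] (w : Fin n → ZMod N) :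
    ((univ : Finset (ZMod N)).filter
      (fun t => GoodCnt a b n (fun i => (w i + t).val + 1))).card = a := by
  classical
  have hNpos : 0 < N := Nat.pos_of_ne_zero (NeZero.ne N)
  set c : Fin n → ZMod N := fun i => -(w i) - 1 with hc
  set cnt : ℕ → ℕ := fun q => (univ.filter fun i : Fin n => c i = (q : ZMod N)).card with hcnt
  set S : ℕ → ℤ := fun q => 1 - b * cnt q with hS
  have hper : ∀ x, S (x + N) = S x := by
    intro x
    have hcast : ((x + N : ℕ) : ZMod N) = (x : ZMod N) := by
      push_cast [ZMod.natCast_self]; ring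
    simp only [hS, hcnt, hcast]
  have hle1 : ∀ x, S x ≤ 1 := by
    intro x; simp only [hS]
    have : (0:ℤ) ≤ (b : ℤ) * cnt x := by positivity
    omega
  have hcnt_tot : ∑ q ∈ range N, cnt q = n := by
    have h0 := fiber_count (n := n) (N := N) N le_rfl c 0
    simp only [Nat.zero_add, Nat.cast_zero, sub_zero] at h0
    have heq : (univ.filter fun i : Fin n => (c i).val < N) = univ := by
      apply Finset.filter_true_of_mem
      intro i _; exact ZMod.val_lt _
    rw [heq] at h0
    simp only [Finset.card_univ, Fintype.card_fin] at h0
    rw [← h0]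
  have htot : Tw S N = a := by
    unfold Tw
    simp only [hS]
    rw [Finset.sum_sub_distrib, ← Finset.mul_sum]
    have h1 : (∑ q ∈ range N, (cnt q : ℤ)) = (n : ℤ) := by
      rw [← Nat.cast_sum]; exact_mod_cast congrArg (Nat.cast : ℕ → ℤ) hcnt_tot
    rw [h1, Finset.sum_const, Finset.card_range]
    simp [hN]; push_cast; ring
  have hTwdiff : ∀ t x : ℕ, Tw S (t + x) - Tw S t = (x : ℤ) - b * ∑ q ∈ range x, (cnt (t + q) : ℤ) := by
    intro t x
    have h2 : Tw S (t + x) = Tw S t + ∑ q ∈ range x, S (t + q) := by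
      unfold Tw
      rw [Finset.sum_range_add]
    rw [h2]
    simp only [hS]
    rw [Finset.sum_sub_distrib, ← Finset.mul_sum, Finset.sum_const, Finset.card_range]
    push_cast
    ring
  have hmain : ∀ t : ℕ, t < N →
      (CGood N S t ↔ GoodCnt a b n (fun i => (w i + (t : ZMod N)).val + 1)) := by
    intro t ht
    set Dt : ℕ → ℕ := fun x => (univ.filter fun i => (c i - (t : ZMod N)).val < x).card with hDt
    have hfc : ∀ x, x ≤ N → Dt x = ∑ q ∈ range x, cnt (t + q) := by
      intro x hx
      simp only [hDt]
      rw [fiber_count x hx c t]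
    have hfcz : ∀ x, x ≤ N → (∑ q ∈ range x, (cnt (t + q) : ℤ)) = (Dt x : ℤ) := by
      intro x hx
      rw [← Nat.cast_sum]
      exact_mod_cast congrArg (Nat.cast : ℕ → ℤ) (hfc x hx).symm
    have hDmono : ∀ x y, x ≤ y → Dt x ≤ Dt y := by
      intro x y hxy
      apply Finset.card_le_card
      intro i hi
      simp only [hDt, Finset.mem_filter] at hi ⊢
      exact ⟨hi.1, lt_of_lt_of_le hi.2 hxy⟩
    have hDle : ∀ x, Dt x ≤ n := by
      intro x
      simpa using Finset.card_le_card (Finset.filter_subset _ (univ : Finset (Fin n)))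
    have step1 : CGood N S t ↔ ∀ x, 1 ≤ x → x ≤ N → b * Dt x < x := by
      constructor
      · intro hg x h1 h2
        have hlt := hg (t + x) (by omega) (by omega)
        have hd := hTwdiff t x
        rw [hfcz x h2] at hd
        have hz : (↑(b * Dt x) : ℤ) < (x : ℤ) := by push_cast; linarith
        exact_mod_cast hz
      · intro hg k hk1 hk2
        have hd := hTwdiff t (k - t)
        rw [hfcz (k - t) (by omega)] at hd
        have hb2 := hg (k - t) (by omega) (by omega)
        have hz : (↑(b * Dt (k - t)) : ℤ) < (↑(k - t) : ℤ) := by exact_mod_cast hb2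
        push_cast at hz
        have hk : t + (k - t) = k := by omega
        rw [hk] at hd
        linarith
    have step2 : (∀ x, 1 ≤ x → x ≤ N → b * Dt x < x) ↔
        (∀ l, 1 ≤ l → l ≤ n → Dt (l * b) < l) := by
      constructor
      · intro hg l h1 h2
        have hlb1 : 1 ≤ l * b := Nat.mul_pos h1 hb
        have hlbN : l * b ≤ N := by
          rw [hN]
          calc l * b ≤ n * b := Nat.mul_le_mul_right b h2
            _ ≤ a + n * b := by omega
        have h3 := hg (l * b) hlb1 hlbN
        have hbd : b * Dt (l * b) < b * l := by
          calc b * Dt (l * b) < l * b := h3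
            _ = b * l := Nat.mul_comm l b
        exact Nat.lt_of_mul_lt_mul_left hbd
      · intro hg x h1 h2
        by_cases hcase : n * b < x
        · calc b * Dt x ≤ b * n := Nat.mul_le_mul_left b (hDle x)
            _ = n * b := Nat.mul_comm b n
            _ < x := hcase
        · push_neg at hcase
          obtain ⟨l, r, hlr, hrb⟩ : ∃ l r, x + b - 1 = b * l + r ∧ r < b :=
            ⟨(x + b - 1) / b, (x + b - 1) % b, (Nat.div_add_mod _ _).symm, Nat.mod_lt _ hb⟩
          have hbl_ge : x ≤ b * l := by omega
          have hbl_le : b * l ≤ x + b - 1 := by omega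
          have hl1 : 1 ≤ l := by
            rcases Nat.eq_zero_or_pos l with h | h
            · subst h; simp at hbl_ge; omega
            · exact h
          have hln : l ≤ n := by
            by_contra hcon
            push_neg at hcon
            have h4 : b * (n + 1) ≤ b * l := Nat.mul_le_mul_left b hcon
            have h5 : b * (n + 1) = n * b + b := by ring
            omega
          have hDtl := hg l hl1 hln
          have h6 : Dt x ≤ Dt (l * b) := hDmono _ _ (by rw [Nat.mul_comm]; exact hbl_ge)
          have hDx : Dt x ≤ l - 1 := by omega
          have h7 : b * Dt x ≤ b * (l - 1) := Nat.mul_le_mul_left b hDx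
          have h8 : b * (l - 1) + b = b * l := by
            rw [← Nat.mul_succ]; congr 1; omega
          omega
    have step3 : (∀ l, 1 ≤ l → l ≤ n → Dt (l * b) < l) ↔
        GoodCnt a b n (fun i => (w i + (t : ZMod N)).val + 1) := by
      set π : Fin n → ℕ := fun i => (w i + (t : ZMod N)).val + 1 with hπ
      have key : ∀ k, k < n → ∀ i : Fin n,
          ((c i - (t : ZMod N)).val < (n - k) * b ↔ ¬ (π i ≤ a + k * b)) := by
        intro k hk i
        have hz : c i - (t : ZMod N) = -(w i + (t : ZMod N)) - 1 := by
          simp only [hc]; ring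
        have hv : (c i - (t : ZMod N)).val = N - 1 - (w i + (t : ZMod N)).val := by
          rw [hz]; exact val_neg_sub_one _
        have hwlt : (w i + (t : ZMod N)).val < N := ZMod.val_lt _
        have hsplit : (n - k) * b + k * b = n * b := by
          rw [← Nat.add_mul]; congr 1; omega
        rw [hv]
        simp only [hπ]
        subst hN
        omega
      have cardeq : ∀ k, k < n →
          Dt ((n - k) * b) + (univ.filter fun i : Fin n => π i ≤ a + k * b).card = n := by
        intro k hk
        have heq : Dt ((n - k) * b) = (univ.filter fun i : Fin n =>
            ¬ (π i ≤ a + k * b)).card := by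
          simp only [hDt]
          congr 1
          apply Finset.filter_congr
          intro i _
          simpa using key k hk i
        rw [heq, add_comm, Finset.card_filter_add_card_filter_not,
          Finset.card_univ, Fintype.card_fin]
      unfold GoodCnt
      constructor
      · intro hg k hk
        have h1 := hg (n - k) (by omega) (by omega)
        have h2 := cardeq k hk
        omega
      · intro hg l h1 h2
        have hkn : n - l < n := by omega
        have h3 := hg (n - l) hkn
        have h4 := cardeq (n - l) hkn
        have : n - (n - l) = l := by omega
        rw [this] at h4
        omega
    rw [step1, step2, step3]
  have hcyc := cycle_lemma N a S hNpos ha hper hle1 htot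
  have hbij : ((univ : Finset (ZMod N)).filter
      (fun τ => GoodCnt a b n (fun i => (w i + τ).val + 1))).card
      = ((range N).filter (CGood N S)).card := by
    apply Finset.card_bij (fun τ _ => τ.val)
    · intro τ hτ
      rw [Finset.mem_filter] at hτ ⊢
      refine ⟨Finset.mem_range.mpr (ZMod.val_lt τ), ?_⟩
      rw [hmain τ.val (ZMod.val_lt τ)]
      rw [ZMod.natCast_rightInverse τ]
      exact hτ.2
    · intro τ _ τ' _ h
      exact ZMod.val_injective N h
    · intro s hs
      rw [Finset.mem_filter, Finset.mem_range] at hs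
      refine ⟨(s : ZMod N), ?_, ZMod.val_cast_of_lt hs.1⟩
      rw [Finset.mem_filter]
      exact ⟨Finset.mem_univ _, (hmain s hs.1).mp hs.2⟩
  rw [hbij, hcyc]

-- from t6.lean
lemma PFfin_card_mul (a b n : ℕ) (ha : 0 < a) (hb : 0 < b) (hn : 0 < n) :
    (PFfin a b n).card * (a + n * b) = a * (a + n * b) ^ n := by
  classical
  set N := a + n * b with hN
  haveI : NeZero N := ⟨by omega⟩
  -- patterns
  set P : (Fin n → ZMod N) → Prop := fun v => GoodCnt a b n (fun i => (v i).val + 1) with hP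
  have hPF : ((univ : Finset (Fin n → ZMod N)).filter P).card = (PFfin a b n).card := by
    apply Finset.card_bij (fun v _ => fun i => (v i).val + 1)
    · intro v hv
      rw [Finset.mem_filter] at hv
      rw [PFfin, Finset.mem_filter]
      constructor
      · rw [Fintype.mem_piFinset]
        intro i
        rw [Finset.mem_Icc]
        have := ZMod.val_lt (v i)
        omega
      · exact hv.2
    · intro v _ v' _ h
      funext i
      have := congrFun h i
      simp only [add_left_inj] at this
      exact ZMod.val_injective N this
    · intro π hπ
      rw [PFfin, Finset.mem_filter, Fintype.mem_piFinset] at hπ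
      refine ⟨fun i => ((π i - 1 : ℕ) : ZMod N), Finset.mem_filter.mpr ⟨Finset.mem_univ _, ?_⟩, ?_⟩
      · have hval : ∀ i, (((π i - 1 : ℕ) : ZMod N)).val + 1 = π i := by
          intro i
          have h1 := hπ.1 i
          rw [Finset.mem_Icc] at h1
          rw [ZMod.val_cast_of_lt (by omega)]
          omega
        simp only [hP]
        have : (fun i => (((π i - 1 : ℕ) : ZMod N)).val + 1) = π := funext hval
        rw [this]
        exact hπ.2
      · funext i
        have h1 := hπ.1 i
        rw [Finset.mem_Icc] at h1
        rw [ZMod.val_cast_of_lt (by omega)]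
        omega
  -- shift invariance
  have hshift : ∀ t : ZMod N,
      ((univ : Finset (Fin n → ZMod N)).filter
        (fun w => GoodCnt a b n (fun i => (w i + t).val + 1))).card
      = ((univ : Finset (Fin n → ZMod N)).filter P).card := by
    intro t
    have := filter_comp_equiv_card
      (Equiv.piCongrRight (fun _ : Fin n => Equiv.addRight t)) P
    rw [← this]
    congr 1
  -- Fubini
  have fub : ∑ w : (Fin n → ZMod N),
        ((univ.filter fun t : ZMod N => GoodCnt a b n (fun i => (w i + t).val + 1)).card)
      = ∑ t : ZMod N,
        ((univ.filter fun w : Fin n → ZMod N => GoodCnt a b n (fun i => (w i + t).val + 1)).card) := by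
    simp_rw [Finset.card_filter]
    rw [Finset.sum_comm]
  have lhs : ∑ w : (Fin n → ZMod N),
      ((univ.filter fun t : ZMod N => GoodCnt a b n (fun i => (w i + t).val + 1)).card)
      = N ^ n * a := by
    rw [Finset.sum_congr rfl (fun w _ => patt_count a b n N ha hb hn hN w)]
    rw [Finset.sum_const, Finset.card_univ]
    simp [ZMod.card]
  have rhs : ∑ t : ZMod N,
      ((univ.filter fun w : Fin n → ZMod N => GoodCnt a b n (fun i => (w i + t).val + 1)).card)
      = N * (PFfin a b n).card := by
    rw [Finset.sum_congr rfl (fun t _ => (hshift t).trans hPF)]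
    rw [Finset.sum_const, Finset.card_univ]
    simp [ZMod.card, mul_comm]
  rw [fub, rhs] at lhs
  calc (PFfin a b n).card * N = N * (PFfin a b n).card := Nat.mul_comm _ _
    _ = N ^ n * a := lhs
    _ = a * N ^ n := Nat.mul_comm _ _

-- from t8.lean
section DecompProof

variable {a b m j : ℕ} (hb : 0 < b) (hm : 0 < m)

-- counting helpers
lemma count_all_vs_es (π : Fin m → ℕ) (c : ℕ) :
    (univ.filter fun i : Fin m => π i ≤ c).card
      ≤ (univ.filter fun i : Fin m => i ≠ ⟨0, hm⟩ ∧ π i ≤ c).card + 1 := by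
  classical
  have hsub : (univ.filter fun i : Fin m => π i ≤ c) ⊆
      insert ⟨0, hm⟩ (univ.filter fun i : Fin m => i ≠ ⟨0, hm⟩ ∧ π i ≤ c) := by
    intro i hi
    rw [Finset.mem_filter] at hi
    by_cases h : i = ⟨0, hm⟩
    · rw [h]; exact Finset.mem_insert_self _ _
    · exact Finset.mem_insert_of_mem (Finset.mem_filter.mpr ⟨Finset.mem_univ _, h, hi.2⟩)
  calc _ ≤ _ := Finset.card_le_card hsub
    _ ≤ _ := Finset.card_insert_le _ _

lemma count_all_ge_es (π : Fin m → ℕ) (c : ℕ) (h0 : π ⟨0, hm⟩ ≤ c) :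
    (univ.filter fun i : Fin m => i ≠ ⟨0, hm⟩ ∧ π i ≤ c).card + 1
      ≤ (univ.filter fun i : Fin m => π i ≤ c).card := by
  classical
  have hsub : insert ⟨0, hm⟩ (univ.filter fun i : Fin m => i ≠ ⟨0, hm⟩ ∧ π i ≤ c)
      ⊆ (univ.filter fun i : Fin m => π i ≤ c) := by
    intro i hi
    rcases Finset.mem_insert.mp hi with h | h
    · subst h; exact Finset.mem_filter.mpr ⟨Finset.mem_univ _, h0⟩
    · rw [Finset.mem_filter] at h
      exact Finset.mem_filter.mpr ⟨Finset.mem_univ _, h.2.2⟩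
  calc _ = (insert (⟨0, hm⟩ : Fin m) (univ.filter fun i : Fin m => i ≠ ⟨0, hm⟩ ∧ π i ≤ c)).card := by
        rw [Finset.card_insert_of_notMem (by simp)]
    _ ≤ _ := Finset.card_le_card hsub

lemma count_all_eq_es (π : Fin m → ℕ) (c : ℕ) (h0 : ¬ (π ⟨0, hm⟩ ≤ c)) :
    (univ.filter fun i : Fin m => π i ≤ c).card
      = (univ.filter fun i : Fin m => i ≠ ⟨0, hm⟩ ∧ π i ≤ c).card := by
  congr 1
  apply Finset.filter_congr
  intro i _
  constructor
  · intro h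
    refine ⟨fun hi => h0 (hi ▸ h), h⟩
  · exact fun h => h.2

lemma es_split (π : Fin m → ℕ) (s t : ℕ) (hst : s ≤ t) :
    Es a b m hm π t = Es a b m hm π s +
      (univ.filter fun i : Fin m =>
        i ≠ ⟨0, hm⟩ ∧ a + s * b < π i ∧ π i ≤ a + t * b).card := by
  classical
  unfold Es
  rw [← Finset.card_filter_add_card_filter_not
    (s := univ.filter fun i : Fin m => i ≠ ⟨0, hm⟩ ∧ π i ≤ a + t * b)
    (p := fun i => π i ≤ a + s * b)]
  congr 1
  · rw [Finset.filter_filter]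
    congr 1
    apply Finset.filter_congr
    intro i _
    have : a + s * b ≤ a + t * b := by
      have := Nat.mul_le_mul_right b hst; omega
    constructor
    · rintro ⟨⟨h1, _⟩, h3⟩; exact ⟨h1, h3⟩
    · rintro ⟨h1, h2⟩; exact ⟨⟨h1, by omega⟩, h2⟩
  · rw [Finset.filter_filter]
    congr 1
    apply Finset.filter_congr
    intro i _
    constructor
    · rintro ⟨⟨h1, h2⟩, h3⟩; exact ⟨h1, by omega, h2⟩
    · rintro ⟨h1, h2, h3⟩; exact ⟨⟨h1, h3⟩, by omega⟩

lemma es_mono (π : Fin m → ℕ) (s t : ℕ) (hst : s ≤ t) :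
    Es a b m hm π s ≤ Es a b m hm π t := by
  rw [es_split (a := a) (b := b) hm π s t hst]; omega

end DecompProof

section Partition

variable {a b m j : ℕ}

lemma es_le_all' (hm : 0 < m) (π : Fin m → ℕ) (c : ℕ) :
    (univ.filter fun i : Fin m => i ≠ ⟨0, hm⟩ ∧ π i ≤ c).card
      ≤ (univ.filter fun i : Fin m => π i ≤ c).card := by
  apply Finset.card_le_card
  intro i hi
  rw [Finset.mem_filter] at hi ⊢
  exact ⟨hi.1, hi.2.2⟩

lemma thresh_eq (s k : ℕ) : a + (s + 1 + k) * b = a + s * b + (b + k * b) := by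
  rw [Nat.add_mul, Nat.add_mul]; omega

lemma big_filter_congr (hm : 0 < m) (π : Fin m → ℕ) (s k : ℕ) :
    (univ.filter fun i : Fin m =>
        i ≠ ⟨0, hm⟩ ∧ a + s * b < π i ∧ π i ≤ a + s * b + (b + k * b))
      = (univ.filter fun i : Fin m =>
        i ≠ ⟨0, hm⟩ ∧ a + s * b < π i ∧ π i ≤ a + (s + 1 + k) * b) := by
  apply Finset.filter_congr
  intro i _
  rw [thresh_eq]

lemma mem_X_to_split (ha : 0 < a) (hb : 0 < b) (hm : 0 < m)
    (hj2 : j ≤ a + (m - 1) * b)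
    (π : Fin m → ℕ) (hπ : π ∈ PFfin a b m) (h0 : π ⟨0, hm⟩ = j) :
    ∃ s, s < m ∧ j ≤ a + s * b ∧ π ∈ SplitSet a b m j hm s := by
  classical
  rw [PFfin, Finset.mem_filter] at hπ
  obtain ⟨hA, hg⟩ := hπ
  have hpos : ∀ i, 1 ≤ π i := by
    intro i
    have := Fintype.mem_piFinset.mp hA i
    rw [Finset.mem_Icc] at this
    exact this.1
  -- all values bounded
  have hall : ∀ i, π i ≤ a + (m - 1) * b := by
    have h1 := hg (m - 1) (by omega)
    have h2 : (univ.filter fun i : Fin m => π i ≤ a + (m - 1) * b).card ≤ m := by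
      calc _ ≤ (univ : Finset (Fin m)).card := Finset.card_le_card (Finset.filter_subset _ _)
        _ = m := by simp
    have h3 : (univ.filter fun i : Fin m => π i ≤ a + (m - 1) * b) = univ := by
      apply Finset.eq_univ_of_card
      have := Finset.card_univ (α := Fin m)
      simp at this ⊢
      omega
    intro i
    have := Finset.mem_filter.mp (h3 ▸ Finset.mem_univ i)
    exact this.2
  -- Es lower bound
  have hEt : ∀ t, t < m → t ≤ Es a b m hm π t := by
    intro t htm
    have h1 := hg t htm
    have h2 := count_all_vs_es hm π (a + t * b)
    unfold Es
    omega
  -- Es at m-1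
  have hEm : Es a b m hm π (m - 1) = m - 1 := by
    unfold Es
    have heq : (univ.filter fun i : Fin m => i ≠ ⟨0, hm⟩ ∧ π i ≤ a + (m - 1) * b)
        = univ.filter (fun i : Fin m => i ≠ ⟨0, hm⟩) := by
      apply Finset.filter_congr
      intro i _
      simp [hall i]
    rw [heq, Finset.filter_ne', Finset.card_erase_of_mem (Finset.mem_univ _)]
    simp
  have hPex : ∃ t, Es a b m hm π t = t := ⟨m - 1, hEm⟩
  set s := Nat.find hPex with hs
  have hsP : Es a b m hm π s = s := Nat.find_spec hPex
  have hsle : s ≤ m - 1 := Nat.find_min' hPex hEm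
  have hsm : s < m := by omega
  have hsmall : ∀ k < s, k + 1 ≤ Es a b m hm π k := by
    intro k hk
    have h1 := hEt k (by omega)
    have h2 : Es a b m hm π k ≠ k := Nat.find_min hPex hk
    omega
  have hjs : j ≤ a + s * b := by
    by_contra hcon
    have h1 := count_all_eq_es hm π (a + s * b) (by rw [h0]; exact hcon)
    have h2 := hg s hsm
    unfold Es at hsP
    omega
  refine ⟨s, hsm, hjs, ?_⟩
  rw [SplitSet, Finset.mem_filter]
  refine ⟨hA, hpos, h0, hsP, hsmall, ?_⟩
  intro k hk
  rw [big_filter_congr hm π s k]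
  have hsplit := es_split (a := a) (b := b) hm π s (s + 1 + k) (by omega)
  have h1 := hEt (s + 1 + k) (by omega)
  omega

lemma split_to_X (ha : 0 < a) (hb : 0 < b) (hm : 0 < m)
    (s : ℕ) (hsm : s < m) (hjs : j ≤ a + s * b)
    (π : Fin m → ℕ) (hπ : π ∈ SplitSet a b m j hm s) :
    π ∈ PFfin a b m ∧ π ⟨0, hm⟩ = j := by
  classical
  rw [SplitSet, Finset.mem_filter] at hπ
  obtain ⟨hA, hpos, h0, hEs, hsmall, hbig⟩ := hπ
  refine ⟨?_, h0⟩
  rw [PFfin, Finset.mem_filter]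
  refine ⟨hA, ?_⟩
  intro k hk
  rcases Nat.lt_or_ge k s with hks | hks
  · have h1 := hsmall k hks
    have h2 := es_le_all' hm π (a + k * b)
    unfold Es at h1
    omega
  · -- k ≥ s
    have hjk : π ⟨0, hm⟩ ≤ a + k * b := by
      rw [h0]
      have : s * b ≤ k * b := Nat.mul_le_mul_right b hks
      omega
    have h2 := count_all_ge_es hm π (a + k * b) hjk
    have h3 := es_split (a := a) (b := b) hm π s k hks
    rcases Nat.eq_or_lt_of_le hks with heq | hlt
    · subst heq
      unfold Es at hEs h3
      omega
    · have hk' : k - s - 1 < m - 1 - s := by omega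
      have h4 := hbig (k - s - 1) hk'
      rw [big_filter_congr hm π s (k - s - 1)] at h4
      have hke : s + 1 + (k - s - 1) = k := by omega
      rw [hke] at h4
      unfold Es at hEs h3 h2
      omega

lemma cond_unique (hm : 0 < m) (π : Fin m → ℕ) (s s' : ℕ)
    (h1 : Cond a b m j hm π s) (h2 : Cond a b m j hm π s') : s = s' := by
  by_contra hne
  wlog hlt : s < s' generalizing s s'
  · exact this s' s h2 h1 (Ne.symm hne) (by omega)
  have ha1 := h1.2.2.1
  have ha2 := h2.2.2.2.1 s hlt
  omega

lemma partition_card (ha : 0 < a) (hb : 0 < b) (hm : 0 < m)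
    (hj2 : j ≤ a + (m - 1) * b) :
    ((PFfin a b m).filter (fun π => π ⟨0, hm⟩ = j)).card
      = ∑ s ∈ (range m).filter (fun s => j ≤ a + s * b),
          (SplitSet a b m j hm s).card := by
  classical
  rw [← Finset.card_biUnion]
  · congr 1
    ext π
    rw [Finset.mem_filter, Finset.mem_biUnion]
    constructor
    · rintro ⟨h1, h2⟩
      obtain ⟨s, hsm, hjs, hmem⟩ := mem_X_to_split ha hb hm hj2 π h1 h2
      exact ⟨s, Finset.mem_filter.mpr ⟨Finset.mem_range.mpr hsm, hjs⟩, hmem⟩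
    · rintro ⟨s, hs, hmem⟩
      rw [Finset.mem_filter, Finset.mem_range] at hs
      exact split_to_X ha hb hm s hs.1 hs.2 π hmem
  · intro s hs s' hs' hne
    rw [Function.onFun, Finset.disjoint_left]
    intro π hπ hπ'
    rw [SplitSet, Finset.mem_filter] at hπ hπ'
    exact hne (cond_unique hm π s s' hπ.2 hπ'.2)

end Partition

-- from t9.lean
lemma filter_card_via_orderIso {m s : ℕ} (S : Finset (Fin m)) (hS : S.card = s)
    (p : Fin m → Prop) [DecidablePred p] :
    ((univ : Finset (Fin s)).filter fun q => p ((S.orderIsoOfFin hS q) : Fin m)).card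
      = (S.filter p).card := by
  apply Finset.card_bij (fun q _ => ((S.orderIsoOfFin hS q : Fin m)))
  · intro q hq
    rw [Finset.mem_filter] at hq ⊢
    exact ⟨(S.orderIsoOfFin hS q).2, hq.2⟩
  · intro q _ q' _ h
    have := Subtype.ext h
    exact (S.orderIsoOfFin hS).injective this
  · intro i hi
    rw [Finset.mem_filter] at hi
    refine ⟨(S.orderIsoOfFin hS).symm ⟨i, hi.1⟩, ?_, ?_⟩
    · rw [Finset.mem_filter]
      refine ⟨Finset.mem_univ _, ?_⟩
      rw [OrderIso.apply_symm_apply]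
      exact hi.2
    · rw [OrderIso.apply_symm_apply]

-- from t10.lean
section Fiber

variable {a b m j : ℕ}

lemma fiber_card (hb : 0 < b) (hm : 0 < m) (s : ℕ) (hsm : s < m)
    (hj1 : 1 ≤ j) (hjm : j ≤ a + m * b)
    (S : Finset (Fin m)) (hS0 : (⟨0, hm⟩ : Fin m) ∉ S) (hScard : S.card = s) :
    ((SplitSet a b m j hm s).filter
      (fun π => (univ.filter fun i : Fin m => i ≠ ⟨0, hm⟩ ∧ π i ≤ a + s * b) = S)).card
      = (PFfin a b s).card * (PFfin b b (m - 1 - s)).card := by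
  classical
  set i0 : Fin m := ⟨0, hm⟩ with hi0
  set K := m - 1 - s with hK
  have hmK : s + 1 + K = m := by omega
  set B : Finset (Fin m) := univ \ insert i0 S with hB
  have hBmem : ∀ i, i ∈ B ↔ (i ≠ i0 ∧ i ∉ S) := by
    intro i
    simp [hB, Finset.mem_sdiff, Finset.mem_insert, not_or]
  have hBcard : B.card = K := by
    rw [hB, Finset.card_sdiff_of_subset (Finset.subset_univ _),
      Finset.card_insert_of_notMem hS0, hScard]
    simp only [Finset.card_univ, Fintype.card_fin]
    omega
  set e1 := S.orderIsoOfFin hScard with he1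
  set e2 := B.orderIsoOfFin hBcard with he2
  rw [← Finset.card_product]
  apply Finset.card_bij'
    (i := fun π _ => (fun q : Fin s => π (e1 q), fun q : Fin K => π (e2 q) - (a + s * b)))
    (j := fun p _ => (fun i : Fin m =>
      if h0 : i = i0 then j
      else if h : i ∈ S then p.1 (e1.symm ⟨i, h⟩)
      else p.2 (e2.symm ⟨i, by rw [hBmem]; exact ⟨h0, h⟩⟩) + (a + s * b)))
  case hi =>
    intro π hπ
    rw [Finset.mem_filter] at hπ
    obtain ⟨hsplit, hfib⟩ := hπ
    rw [SplitSet, Finset.mem_filter] at hsplit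
    obtain ⟨hA, hpos, h0, hEs, hsmall, hbig⟩ := hsplit
    have hSmem : ∀ i : Fin m, i ∈ S ↔ (i ≠ i0 ∧ π i ≤ a + s * b) := by
      intro i
      rw [← hfib]
      simp
    have hBval : ∀ i : Fin m, i ∈ B → a + s * b < π i := by
      intro i hi
      rw [hBmem] at hi
      by_contra hcon
      exact hi.2 ((hSmem i).mpr ⟨hi.1, by omega⟩)
    have hub : ∀ i, π i ≤ a + m * b := by
      intro i
      have := Fintype.mem_piFinset.mp hA i
      rw [Finset.mem_Icc] at this
      exact this.2
    rw [Finset.mem_product]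
    constructor
    · -- small part in PFfin a b s
      show (fun q : Fin s => π (e1 q)) ∈ PFfin a b s
      rw [PFfin, Finset.mem_filter]
      constructor
      · rw [Fintype.mem_piFinset]
        intro q
        rw [Finset.mem_Icc]
        have h1 := ((hSmem (e1 q)).mp (e1 q).2).2
        exact ⟨hpos _, h1⟩
      · intro k hk
        have heq := filter_card_via_orderIso S hScard (fun i => π i ≤ a + k * b)
        rw [heq]
        have hset : S.filter (fun i => π i ≤ a + k * b)
            = univ.filter fun i : Fin m => i ≠ i0 ∧ π i ≤ a + k * b := by
          ext i
          rw [Finset.mem_filter, Finset.mem_filter]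
          constructor
          · rintro ⟨h1, h2⟩
            exact ⟨Finset.mem_univ _, ((hSmem i).mp h1).1, h2⟩
          · rintro ⟨_, h1, h2⟩
            have hkb : k * b ≤ s * b := Nat.mul_le_mul_right b (by omega)
            exact ⟨(hSmem i).mpr ⟨h1, by omega⟩, h2⟩
        rw [hset]
        exact hsmall k hk
    · -- big part in PFfin b b K
      show (fun q : Fin K => π (e2 q) - (a + s * b)) ∈ PFfin b b (m - 1 - s)
      rw [PFfin, Finset.mem_filter]
      constructor
      · rw [Fintype.mem_piFinset]
        intro q
        rw [Finset.mem_Icc]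
        have h1 := hBval (e2 q) (e2 q).2
        have h2 := hub (e2 q)
        have h3 : a + m * b = a + s * b + (b + K * b) := by
          rw [← hmK]; ring
        have h4 : (m - 1 - s) * b = K * b := by rw [hK]
        refine ⟨?_, ?_⟩
        · omega
        · omega
      · intro k hk
        have heq := filter_card_via_orderIso B hBcard
          (fun i => π i - (a + s * b) ≤ b + k * b)
        rw [heq]
        have hset : B.filter (fun i => π i - (a + s * b) ≤ b + k * b)
            = univ.filter fun i : Fin m =>
              i ≠ i0 ∧ a + s * b < π i ∧ π i ≤ a + s * b + (b + k * b) := by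
          ext i
          rw [Finset.mem_filter, Finset.mem_filter]
          constructor
          · rintro ⟨h1, h2⟩
            have h3 := hBval i h1
            exact ⟨Finset.mem_univ _, ((hBmem i).mp h1).1, h3, by omega⟩
          · rintro ⟨_, h1, h2, h3⟩
            refine ⟨(hBmem i).mpr ⟨h1, ?_⟩, by omega⟩
            intro hiS
            have := ((hSmem i).mp hiS).2
            omega
        rw [hset]
        exact hbig k hk
  case hj =>
    rintro ⟨f, g⟩ hp
    rw [Finset.mem_product] at hp
    obtain ⟨hf, hg⟩ := hp
    rw [PFfin, Finset.mem_filter] at hf hg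
    obtain ⟨hfA, hfG⟩ := hf
    obtain ⟨hgA, hgG⟩ := hg
    have hfv : ∀ q, 1 ≤ f q ∧ f q ≤ a + s * b := by
      intro q
      have := Fintype.mem_piFinset.mp hfA q
      rw [Finset.mem_Icc] at this
      exact this
    have hgv : ∀ q, 1 ≤ g q ∧ g q ≤ b + K * b := by
      intro q
      have := Fintype.mem_piFinset.mp hgA q
      rw [Finset.mem_Icc] at this
      exact this
    set π : Fin m → ℕ := fun i =>
      if h0 : i = i0 then j
      else if h : i ∈ S then f (e1.symm ⟨i, h⟩)
      else g (e2.symm ⟨i, by rw [hBmem]; exact ⟨h0, h⟩⟩) + (a + s * b)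
      with hπ
    -- value facts
    have hπ0 : π i0 = j := by simp [hπ]
    have hπS : ∀ i (h : i ∈ S), π i = f (e1.symm ⟨i, h⟩) := by
      intro i h
      have hne : i ≠ i0 := fun hc => hS0 (hc ▸ h)
      simp [hπ, hne, h]
    have hπB : ∀ i (h : i ∈ B), π i = g (e2.symm ⟨i, h⟩) + (a + s * b) := by
      intro i h
      rw [hBmem] at h
      simp [hπ, h.1, h.2]
    have hfibS : (univ.filter fun i : Fin m => i ≠ i0 ∧ π i ≤ a + s * b) = S := by
      ext i
      rw [Finset.mem_filter]
      constructor
      · rintro ⟨_, h1, h2⟩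
        by_contra hiS
        have hi : i ∈ B := (hBmem i).mpr ⟨h1, hiS⟩
        rw [hπB i hi] at h2
        have hg1 := (hgv (e2.symm ⟨i, hi⟩)).1
        omega
      · intro h
        have hne : i ≠ i0 := fun hc => hS0 (hc ▸ h)
        refine ⟨Finset.mem_univ _, hne, ?_⟩
        rw [hπS i h]
        exact (hfv _).2
    rw [Finset.mem_filter]
    refine ⟨?_, hfibS⟩
    rw [SplitSet, Finset.mem_filter]
    have hπpos : ∀ i, 1 ≤ π i := by
      intro i
      by_cases h1 : i = i0
      · rw [h1, hπ0]; exact hj1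
      · by_cases h2 : i ∈ S
        · rw [hπS i h2]; exact (hfv _).1
        · have hi : i ∈ B := (hBmem i).mpr ⟨h1, h2⟩
          rw [hπB i hi]
          have hg1 := (hgv (e2.symm ⟨i, hi⟩)).1
          omega
    constructor
    · -- ambient
      rw [Fintype.mem_piFinset]
      intro i
      rw [Finset.mem_Icc]
      refine ⟨hπpos i, ?_⟩
      by_cases h1 : i = i0
      · rw [h1, hπ0]; exact hjm
      · by_cases h2 : i ∈ S
        · rw [hπS i h2]
          have := (hfv (e1.symm ⟨i, h2⟩)).2
          have hsb : s * b ≤ m * b := Nat.mul_le_mul_right b (by omega)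
          omega
        · have hi : i ∈ B := (hBmem i).mpr ⟨h1, h2⟩
          rw [hπB i hi]
          have := (hgv (e2.symm ⟨i, hi⟩)).2
          have h3 : a + m * b = a + s * b + (b + K * b) := by
            rw [← hmK]; ring
          omega
    refine ⟨hπpos, hπ0, ?_, ?_, ?_⟩
    · -- Es = s
      show (univ.filter fun i : Fin m => i ≠ i0 ∧ π i ≤ a + s * b).card = s
      rw [hfibS]
      exact hScard
    · -- small
      intro k hk
      show k + 1 ≤ (univ.filter fun i : Fin m => i ≠ i0 ∧ π i ≤ a + k * b).card
      have hset : (univ.filter fun i : Fin m => i ≠ i0 ∧ π i ≤ a + k * b)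
          = S.filter (fun i => π i ≤ a + k * b) := by
        ext i
        rw [Finset.mem_filter, Finset.mem_filter]
        constructor
        · rintro ⟨_, h1, h2⟩
          have hkb : k * b ≤ s * b := Nat.mul_le_mul_right b (by omega)
          have : i ∈ (univ.filter fun i : Fin m => i ≠ i0 ∧ π i ≤ a + s * b) := by
            rw [Finset.mem_filter]
            exact ⟨Finset.mem_univ _, h1, by omega⟩
          rw [hfibS] at this
          exact ⟨this, h2⟩
        · rintro ⟨h1, h2⟩
          have hne : i ≠ i0 := fun hc => hS0 (hc ▸ h1)
          exact ⟨Finset.mem_univ _, hne, h2⟩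
      rw [hset, ← filter_card_via_orderIso S hScard (fun i => π i ≤ a + k * b)]
      have hcongr : ∀ q : Fin s, π ((e1 q : Fin m)) = f q := by
        intro q
        rw [hπS _ (e1 q).2]
        congr 1
        rw [← Subtype.coe_eta (e1 q) (e1 q).2]
        rw [OrderIso.symm_apply_apply]
      have : ((univ : Finset (Fin s)).filter fun q => π ((e1 q : Fin m)) ≤ a + k * b)
          = ((univ : Finset (Fin s)).filter fun q => f q ≤ a + k * b) := by
        apply Finset.filter_congr
        intro q _
        rw [hcongr q]
      rw [this]
      exact hfG k hk
    · -- big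
      intro k hk
      show k + 1 ≤ (univ.filter fun i : Fin m =>
        i ≠ i0 ∧ a + s * b < π i ∧ π i ≤ a + s * b + (b + k * b)).card
      have hset : (univ.filter fun i : Fin m =>
            i ≠ i0 ∧ a + s * b < π i ∧ π i ≤ a + s * b + (b + k * b))
          = B.filter (fun i => π i ≤ a + s * b + (b + k * b)) := by
        ext i
        rw [Finset.mem_filter, Finset.mem_filter]
        constructor
        · rintro ⟨_, h1, h2, h3⟩
          refine ⟨(hBmem i).mpr ⟨h1, ?_⟩, h3⟩
          intro hiS
          have : i ∈ (univ.filter fun i : Fin m => i ≠ i0 ∧ π i ≤ a + s * b) := by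
            rw [hfibS]; exact hiS
          rw [Finset.mem_filter] at this
          omega
        · rintro ⟨h1, h2⟩
          have h3 := (hBmem i).mp h1
          refine ⟨Finset.mem_univ _, h3.1, ?_, h2⟩
          rw [hπB i h1]
          have hg1 := (hgv (e2.symm ⟨i, h1⟩)).1
          omega
      rw [hset, ← filter_card_via_orderIso B hBcard
        (fun i => π i ≤ a + s * b + (b + k * b))]
      have hcongr : ∀ q : Fin K, π ((e2 q : Fin m)) = g q + (a + s * b) := by
        intro q
        rw [hπB _ (e2 q).2]
        congr 2
        rw [← Subtype.coe_eta (e2 q) (e2 q).2]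
        rw [OrderIso.symm_apply_apply]
      have : ((univ : Finset (Fin K)).filter fun q => π ((e2 q : Fin m)) ≤ a + s * b + (b + k * b))
          = ((univ : Finset (Fin K)).filter fun q => g q ≤ b + k * b) := by
        apply Finset.filter_congr
        intro q _
        rw [hcongr q]
        constructor
        · intro h; omega
        · intro h; omega
      rw [this]
      exact hgG k hk
  case left_inv =>
    intro π hπ
    rw [Finset.mem_filter] at hπ
    obtain ⟨hsplit, hfib⟩ := hπ
    rw [SplitSet, Finset.mem_filter] at hsplit
    obtain ⟨hA, hpos, h0, hEs, hsmall, hbig⟩ := hsplit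
    have hSmem : ∀ i : Fin m, i ∈ S ↔ (i ≠ i0 ∧ π i ≤ a + s * b) := by
      intro i; rw [← hfib]; simp
    funext i
    by_cases h1 : i = i0
    · simp [h1, hi0, h0]
    · by_cases h2 : i ∈ S
      · simp [h1, h2]
      · have hi : i ∈ B := (hBmem i).mpr ⟨h1, h2⟩
        have hval : a + s * b < π i := by
          by_contra hcon
          exact h2 ((hSmem i).mpr ⟨h1, by omega⟩)
        simp [h1, h2]
        omega
  case right_inv =>
    rintro ⟨f, g⟩ hp
    rw [Finset.mem_product] at hp
    refine Prod.ext ?_ ?_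
    · funext q
      have hiS : ((e1 q : Fin m)) ∈ S := (e1 q).2
      have hne : (e1 q : Fin m) ≠ i0 := fun hc => hS0 (hc ▸ hiS)
      simp only [hne, dif_neg, not_false_iff, hiS, dif_pos]
      congr 1
      have hst : (⟨(e1 q : Fin m), hiS⟩ : {x // x ∈ S}) = e1 q := Subtype.coe_eta _ _
      rw [hst, OrderIso.symm_apply_apply]
    · funext q
      have hiB : ((e2 q : Fin m)) ∈ B := (e2 q).2
      have h4 := (hBmem (e2 q : Fin m)).mp hiB
      simp only [h4.1, dif_neg, not_false_iff, h4.2, dif_neg]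
      rw [Nat.add_sub_cancel]
      congr 1
      have hst : (⟨(e2 q : Fin m), hiB⟩ : {x // x ∈ B}) = e2 q := Subtype.coe_eta _ _
      rw [hst, OrderIso.symm_apply_apply]

end Fiber

-- from t11.lean
section S

variable {a b m j : ℕ}

lemma splitset_card (hb : 0 < b) (hm : 0 < m) (s : ℕ) (hsm : s < m)
    (hj1 : 1 ≤ j) (hjm : j ≤ a + m * b) :
    (SplitSet a b m j hm s).card
      = (m - 1).choose s * ((PFfin a b s).card * (PFfin b b (m - 1 - s)).card) := by
  classical
  have hmem : ∀ π ∈ SplitSet a b m j hm s,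
      (univ.filter fun i : Fin m => i ≠ ⟨0, hm⟩ ∧ π i ≤ a + s * b)
        ∈ (univ.erase (⟨0, hm⟩ : Fin m)).powersetCard s := by
    intro π hπ
    rw [SplitSet, Finset.mem_filter] at hπ
    rw [Finset.mem_powersetCard]
    constructor
    · intro i hi
      rw [Finset.mem_filter] at hi
      rw [Finset.mem_erase]
      exact ⟨hi.2.1, Finset.mem_univ _⟩
    · exact hπ.2.2.2.1
  rw [Finset.card_eq_sum_card_fiberwise hmem]
  have hcongr : ∀ S ∈ (univ.erase (⟨0, hm⟩ : Fin m)).powersetCard s,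
      ((SplitSet a b m j hm s).filter
        (fun π => (univ.filter fun i : Fin m => i ≠ ⟨0, hm⟩ ∧ π i ≤ a + s * b) = S)).card
      = (PFfin a b s).card * (PFfin b b (m - 1 - s)).card := by
    intro S hS
    rw [Finset.mem_powersetCard] at hS
    have hS0 : (⟨0, hm⟩ : Fin m) ∉ S := fun h => (Finset.mem_erase.mp (hS.1 h)).1 rfl
    exact fiber_card hb hm s hsm hj1 hjm S hS0 hS.2
  rw [Finset.sum_congr rfl hcongr, Finset.sum_const, Finset.card_powersetCard,
    Finset.card_erase_of_mem (Finset.mem_univ _), Finset.card_univ, Fintype.card_fin,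
    smul_eq_mul]

lemma decomposition (ha : 0 < a) (hb : 0 < b) (hm : 0 < m)
    (hj1 : 1 ≤ j) (hj2 : j ≤ a + (m - 1) * b) :
    ((PFfin a b m).filter (fun π => π ⟨0, hm⟩ = j)).card
      = ∑ s ∈ (range m).filter (fun s => j ≤ a + s * b),
          (m - 1).choose s * ((PFfin a b s).card * (PFfin b b (m - 1 - s)).card) := by
  rw [partition_card ha hb hm hj2]
  apply Finset.sum_congr rfl
  intro s hs
  rw [Finset.mem_filter, Finset.mem_range] at hs
  have hjm : j ≤ a + m * b := by
    have : (m - 1) * b ≤ m * b := Nat.mul_le_mul_right b (by omega)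
    omega
  exact splitset_card hb hm s hs.1 hj1 hjm

end S

-- from t12.lean
lemma PFfin_zero (α β : ℕ) : (PFfin α β 0).card = 1 := by
  rw [PFfin, Finset.filter_true_of_mem (fun π _ => by intro k hk; omega)]
  rw [Fintype.card_piFinset]
  simp

lemma goodcnt_all_le {a b m : ℕ} (hm : 0 < m) (π : Fin m → ℕ)
    (hg : GoodCnt a b m π) : ∀ i, π i ≤ a + (m - 1) * b := by
  have h1 := hg (m - 1) (by omega)
  have h3 : (univ.filter fun i : Fin m => π i ≤ a + (m - 1) * b) = univ := by
    apply Finset.eq_univ_of_card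
    have h2 : (univ.filter fun i : Fin m => π i ≤ a + (m - 1) * b).card ≤ m := by
      calc _ ≤ (univ : Finset (Fin m)).card := Finset.card_le_card (Finset.filter_subset _ _)
        _ = m := by simp
    simp only [Finset.card_univ, Fintype.card_fin]
    omega
  intro i
  have h4 := Finset.eq_univ_iff_forall.mp h3 i
  exact (Finset.mem_filter.mp h4).2

lemma PF_real (α β n : ℕ) (hα : 0 < α) (hβ : 0 < β) :
    ((PFfin α β n).card : ℝ) = α * ((α + n * β : ℕ) : ℝ) ^ ((n : ℤ) - 1) := by
  have hN0 : ((α + n * β : ℕ) : ℝ) ≠ 0 := Nat.cast_ne_zero.mpr (by omega)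
  rcases Nat.eq_zero_or_pos n with h | h
  · subst h
    rw [PFfin_zero]
    have : ((0 : ℕ) : ℤ) - 1 = -1 := by norm_num
    rw [this, zpow_neg_one]
    have h0 : (α + 0 * β : ℕ) = α := by omega
    rw [h0]
    rw [Nat.cast_one]
    field_simp
  · have key := PFfin_card_mul α β n hα hβ h
    have hc : ((PFfin α β n).card : ℝ) * ((α + n * β : ℕ) : ℝ)
        = (α : ℝ) * ((α + n * β : ℕ) : ℝ) ^ n := by
      exact_mod_cast congrArg (Nat.cast : ℕ → ℝ) key
    apply mul_right_cancel₀ hN0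
    rw [hc, mul_assoc]
    congr 1
    rw [← zpow_natCast (((α + n * β : ℕ) : ℝ)) n, ← zpow_add_one₀ hN0]
    congr 1
    omega

lemma set_eq_finset {a b m j : ℕ} (hm : 0 < m) (hb : 0 < b) :
    {π : Fin m → ℕ | IsParkingFn (fun i => a + i.val * b) π ∧ π ⟨0, hm⟩ = j}
      = ↑((PFfin a b m).filter fun π => π ⟨0, hm⟩ = j) := by
  ext π
  rw [Set.mem_setOf_eq, Finset.mem_coe, Finset.mem_filter, PFfin, Finset.mem_filter,
    parking_iff]
  constructor
  · rintro ⟨⟨hpos, hg⟩, h0⟩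
    refine ⟨⟨?_, hg⟩, h0⟩
    rw [Fintype.mem_piFinset]
    intro i
    rw [Finset.mem_Icc]
    have h1 := goodcnt_all_le hm π hg i
    have h2 : (m - 1) * b ≤ m * b := Nat.mul_le_mul_right b (by omega)
    exact ⟨hpos i, by omega⟩
  · rintro ⟨⟨hA, hg⟩, h0⟩
    refine ⟨⟨?_, hg⟩, h0⟩
    intro i
    have := Fintype.mem_piFinset.mp hA i
    rw [Finset.mem_Icc] at this
    omega

/-- The number of `(a,b)`-parking functions of length `m` with first coordinate `j` equals
`ab ∑_{s : a+sb ≥ j} C(m-1,s) (a+sb)^(s-1) ((m-s)b)^(m-2-s)` (integer exponents);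
in particular the count is the same for all `j ≤ a`. -/
theorem count_first_coordinate (a b m : ℕ) (ha : 0 < a) (hb : 0 < b) (hm : 0 < m) :
    (∀ j, 1 ≤ j → j ≤ a + (m - 1) * b →
      (Set.ncard {π : Fin m → ℕ | IsParkingFn (fun i => a + i.val * b) π ∧
          π ⟨0, hm⟩ = j} : ℝ) =
        (a : ℝ) * (b : ℝ) * ∑ s ∈ (Finset.range m).filter (fun s => j ≤ a + s * b),
          ((m - 1).choose s : ℝ) * ((a + s * b : ℕ) : ℝ) ^ ((s : ℤ) - 1) *
            (((m - s) * b : ℕ) : ℝ) ^ ((m : ℤ) - 2 - s)) ∧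
    ∀ j₁ j₂, 1 ≤ j₁ → j₁ ≤ a → 1 ≤ j₂ → j₂ ≤ a →
      Set.ncard {π : Fin m → ℕ | IsParkingFn (fun i => a + i.val * b) π ∧ π ⟨0, hm⟩ = j₁} =
        Set.ncard {π : Fin m → ℕ | IsParkingFn (fun i => a + i.val * b) π ∧ π ⟨0, hm⟩ = j₂} := by
  have main : ∀ j, 1 ≤ j → j ≤ a + (m - 1) * b →
      (Set.ncard {π : Fin m → ℕ | IsParkingFn (fun i => a + i.val * b) π ∧
          π ⟨0, hm⟩ = j} : ℝ) =
        (a : ℝ) * (b : ℝ) * ∑ s ∈ (Finset.range m).filter (fun s => j ≤ a + s * b),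
          ((m - 1).choose s : ℝ) * ((a + s * b : ℕ) : ℝ) ^ ((s : ℤ) - 1) *
            (((m - s) * b : ℕ) : ℝ) ^ ((m : ℤ) - 2 - s) := by
    intro j hj1 hj2
    rw [set_eq_finset hm hb, Set.ncard_coe_finset,
      decomposition ha hb hm hj1 hj2]
    rw [Nat.cast_sum, Finset.mul_sum]
    apply Finset.sum_congr rfl
    intro s hs
    rw [Finset.mem_filter, Finset.mem_range] at hs
    rw [Nat.cast_mul, Nat.cast_mul]
    rw [PF_real a b s ha hb, PF_real b b (m - 1 - s) hb hb]
    have h1 : (b + (m - 1 - s) * b : ℕ) = ((m - s) * b : ℕ) := by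
      have h2 : m - s = (m - 1 - s) + 1 := by omega
      rw [h2, Nat.succ_mul]
      omega
    have h2 : ((m - 1 - s : ℕ) : ℤ) - 1 = (m : ℤ) - 2 - s := by omega
    rw [h1, h2]
    ring
  refine ⟨main, ?_⟩
  intro j₁ j₂ h11 h12 h21 h22
  have hfil : ∀ jj, jj ≤ a →
      (Finset.range m).filter (fun s => jj ≤ a + s * b) = Finset.range m := by
    intro jj hjj
    apply Finset.filter_true_of_mem
    intro s _
    omega
  have e1 := main j₁ h11 (by omega)
  have e2 := main j₂ h21 (by omega)
  rw [hfil j₁ h12] at e1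
  rw [hfil j₂ h22] at e2
  have := e1.trans e2.symm
  exact_mod_cast this
end

section
/- Abel's multinomial theorem, special instance: for positive reals x₁,...,xₘ and nonnegative integer n, ∑_{s ⊨ n} binom(n; s₁,...,sₘ) ∏ⱼ (xⱼ+sⱼ)^(sⱼ−1) = (x₁···xₘ)^(−1)·(x₁+...+xₘ)·(x₁+...+xₘ+n)^(n−1), where the sum is over all m-tuples of nonnegative integers summing to n. -/
open Finset

/-- Abel polynomial (instance `a = -1`): `abelA n x = x (x+n)^(n-1)` for `n ≥ 1`, `abelA 0 x = 1`,
written without subtraction issues. -/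
noncomputable def abelA (n : ℕ) (x : ℝ) : ℝ := (x + n) ^ n - n * (x + n) ^ (n - 1)

@[simp] lemma abelA_zero (x : ℝ) : abelA 0 x = 1 := by simp [abelA]

lemma abelA_succ (n : ℕ) (x : ℝ) : abelA (n + 1) x = x * (x + (n + 1)) ^ n := by
  simp only [abelA, Nat.add_sub_cancel, pow_succ]; push_cast; ring

lemma abelA_zero_left {n : ℕ} (hn : n ≠ 0) : abelA n 0 = 0 := by
  obtain ⟨k, rfl⟩ := Nat.exists_eq_succ_of_ne_zero hn
  simp [abelA_succ]

lemma hasDerivAt_abelA (k : ℕ) (x : ℝ) :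
    HasDerivAt (abelA k) (k * abelA (k - 1) (x + 1)) x := by
  cases k with
  | zero =>
    have : abelA 0 = fun _ : ℝ => (1 : ℝ) := by funext t; simp [abelA]
    rw [this]
    simpa using hasDerivAt_const x (1 : ℝ)
  | succ j =>
    have h1 : HasDerivAt (fun x : ℝ => x + ((j : ℝ) + 1)) 1 x :=
      (hasDerivAt_id x).add_const _
    have h2 := (h1.fun_pow (j + 1)).fun_sub ((h1.fun_pow j).const_mul ((j : ℝ) + 1))
    simp only [Nat.add_sub_cancel, mul_one] at h2
    have hfun : (fun x : ℝ => (x + ((j : ℝ) + 1)) ^ (j + 1) - ((j : ℝ) + 1) * (x + ((j : ℝ) + 1)) ^ j)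
        = abelA (j + 1) := by
      funext t; simp only [abelA, Nat.add_sub_cancel]; push_cast; ring
    rw [hfun] at h2
    convert h2 using 1
    case e'_4 => rfl
    case e'_5 => rfl
    cases j with
    | zero => simp [abelA]
    | succ i =>
      simp only [abelA, Nat.add_sub_cancel, Nat.succ_sub_one]
      push_cast
      ring

/-- Abel's binomial theorem: the Abel polynomials are of binomial type. -/
theorem abelA_binomial (n : ℕ) (x y : ℝ) :
    ∑ k ∈ range (n + 1), (n.choose k : ℝ) * abelA k x * abelA (n - k) y = abelA n (x + y) := by
  induction n generalizing x y with
  | zero => simp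
  | succ n ih =>
    set F : ℝ → ℝ := fun t =>
      ∑ k ∈ range (n + 2), ((n+1).choose k : ℝ) * abelA k t * abelA (n + 1 - k) y with hFdef
    set G : ℝ → ℝ := fun t => abelA (n + 1) (t + y) with hGdef
    have hFG : ∀ t : ℝ, HasDerivAt (fun u => F u - G u) 0 t := by
      intro t
      have hF : HasDerivAt F (∑ k ∈ range (n + 2),
          ((n+1).choose k : ℝ) * (k * abelA (k - 1) (t + 1)) * abelA (n + 1 - k) y) t := by
        apply HasDerivAt.fun_sum
        intro k _
        simpa [mul_assoc] using
          (((hasDerivAt_abelA k t).const_mul (((n+1).choose k : ℝ))).mul_const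
            (abelA (n + 1 - k) y))
      have hG : HasDerivAt G ((n + 1 : ℕ) * abelA n (t + y + 1)) t := by
        have := (hasDerivAt_abelA (n + 1) (t + y)).comp t ((hasDerivAt_id t).add_const y)
        simpa [Function.comp_def] using this
      have hD : (∑ k ∈ range (n + 2),
          ((n+1).choose k : ℝ) * (k * abelA (k - 1) (t + 1)) * abelA (n + 1 - k) y)
          = ((n + 1 : ℕ) : ℝ) * abelA n (t + y + 1) := by
        rw [Finset.sum_range_succ']
        simp only [Nat.cast_zero, zero_mul, mul_zero, add_zero, Nat.add_sub_cancel,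
          Nat.succ_sub_succ, Nat.sub_zero]
        have : ∀ i ∈ range (n + 1),
            ((n+1).choose (i+1) : ℝ) * ((i+1 : ℕ) * abelA i (t + 1)) * abelA (n - i) y
            = ((n + 1 : ℕ) : ℝ) * ((n.choose i : ℝ) * abelA i (t + 1) * abelA (n - i) y) := by
          intro i _
          have hc : (n + 1) * n.choose i = (n+1).choose (i+1) * (i+1) :=
            Nat.add_one_mul_choose_eq n i
          have hc' : ((n + 1 : ℕ) : ℝ) * (n.choose i : ℝ)
              = ((n+1).choose (i+1) : ℝ) * ((i+1 : ℕ) : ℝ) := by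
            exact_mod_cast congrArg (Nat.cast (R := ℝ)) hc
          push_cast at hc' ⊢
          linear_combination (-(abelA i (t + 1) * abelA (n - i) y)) * hc'
        rw [Finset.sum_congr rfl this, ← Finset.mul_sum, ih (t + 1) y,
          show t + 1 + y = t + y + 1 from by ring]
      rw [hD] at hF
      simpa using hF.fun_sub hG
    have hconst : F x - G x = F 0 - G 0 :=
      is_const_of_deriv_eq_zero (fun t => (hFG t).differentiableAt)
        (fun t => (hFG t).deriv) x 0
    have hF0 : F 0 = G 0 := by
      rw [hFdef, hGdef]
      simp only
      rw [Finset.sum_eq_single 0]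
      · simp
      · intro k _ hk
        simp [abelA_zero_left hk]
      · simp
    have := hconst
    rw [hF0, sub_self] at this
    have : F x = G x := by linarith
    simpa [hFdef, hGdef] using this

lemma sum_antidiagonalTuple_succ {M : Type*} [AddCommMonoid M] (k n : ℕ)
    (f : (Fin (k + 1) → ℕ) → M) :
    ∑ s ∈ Finset.Nat.antidiagonalTuple (k + 1) n, f s
      = ∑ p ∈ Finset.HasAntidiagonal.antidiagonal n,
          ∑ t ∈ Finset.Nat.antidiagonalTuple k p.2, f (Fin.cons p.1 t) := by
  rw [Finset.sum_sigma']
  apply Finset.sum_nbij'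
    (i := fun s : Fin (k + 1) → ℕ => (⟨(s 0, ∑ j : Fin k, s j.succ), Fin.tail s⟩ :
      Σ p : ℕ × ℕ, Fin k → ℕ))
    (j := fun q : Σ _ : ℕ × ℕ, Fin k → ℕ => Fin.cons q.1.1 q.2)
  · intro s hs
    rw [Finset.Nat.mem_antidiagonalTuple] at hs
    rw [Finset.mem_sigma, Finset.HasAntidiagonal.mem_antidiagonal, Finset.Nat.mem_antidiagonalTuple]
    constructor
    · rw [← hs, Fin.sum_univ_succ]
    · rfl
  · intro q hq
    rw [Finset.mem_sigma, Finset.HasAntidiagonal.mem_antidiagonal, Finset.Nat.mem_antidiagonalTuple] at hq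
    rw [Finset.Nat.mem_antidiagonalTuple, Fin.sum_univ_succ]
    simp [hq.2, hq.1]
  · intro s _
    simp [Fin.tail]
  · intro q hq
    rw [Finset.mem_sigma, Finset.HasAntidiagonal.mem_antidiagonal, Finset.Nat.mem_antidiagonalTuple] at hq
    ext : 1
    · simp [hq.2, Fin.sum_univ_succ]
    · simp [Fin.tail]
  · intro s _
    simp [Fin.tail]

lemma multinomial_univ_cons (k : ℕ) (a : ℕ) (t : Fin k → ℕ) :
    Nat.multinomial Finset.univ (Fin.cons a t)
      = (a + ∑ i, t i).choose a * Nat.multinomial Finset.univ t := by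
  rw [Fin.univ_succ, Nat.multinomial_cons]
  congr 1
  · simp [Finset.sum_map]
  · unfold Nat.multinomial
    rw [Finset.sum_map, Finset.prod_map]
    simp

/-- Abel's multinomial theorem in terms of the Abel polynomials. -/
theorem abelA_multinomial (m n : ℕ) (x : Fin m → ℝ) :
    ∑ s ∈ Finset.Nat.antidiagonalTuple m n,
        (Nat.multinomial Finset.univ s : ℝ) * ∏ j, abelA (s j) (x j)
      = abelA n (∑ j, x j) := by
  induction m generalizing n with
  | zero =>
    cases n with
    | zero => simp [Finset.Nat.antidiagonalTuple_zero_zero]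
    | succ n =>
      simp [Finset.Nat.antidiagonalTuple_zero_succ, abelA_zero_left (Nat.succ_ne_zero n)]
  | succ m ih =>
    rw [sum_antidiagonalTuple_succ]
    have hstep : ∀ p ∈ Finset.HasAntidiagonal.antidiagonal n,
        (∑ t ∈ Finset.Nat.antidiagonalTuple m p.2,
          (Nat.multinomial Finset.univ (Fin.cons p.1 t) : ℝ) *
            ∏ j, abelA ((Fin.cons p.1 t : Fin (m+1) → ℕ) j) (x j))
        = (n.choose p.1 : ℝ) * abelA p.1 (x 0) * abelA p.2 (∑ j : Fin m, x j.succ) := by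
      intro p hp
      rw [Finset.HasAntidiagonal.mem_antidiagonal] at hp
      have : ∀ t ∈ Finset.Nat.antidiagonalTuple m p.2,
          (Nat.multinomial Finset.univ (Fin.cons p.1 t) : ℝ) *
              ∏ j, abelA ((Fin.cons p.1 t : Fin (m+1) → ℕ) j) (x j)
          = (n.choose p.1 : ℝ) * abelA p.1 (x 0) *
              ((Nat.multinomial Finset.univ t : ℝ) * ∏ j : Fin m, abelA (t j) (x j.succ)) := by
        intro t ht
        rw [Finset.Nat.mem_antidiagonalTuple] at ht
        rw [multinomial_univ_cons, ht, hp, Fin.prod_univ_succ]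
        simp only [Fin.cons_zero, Fin.cons_succ]
        push_cast
        ring
      rw [Finset.sum_congr rfl this, ← Finset.mul_sum, ih p.2 (fun j => x j.succ)]
    rw [Finset.sum_congr rfl hstep, Finset.Nat.sum_antidiagonal_eq_sum_range_succ_mk,
      abelA_binomial n (x 0) (∑ j : Fin m, x j.succ), Fin.sum_univ_succ]

lemma zpow_eq_inv_mul_abelA {x : ℝ} (hx : x ≠ 0) (s : ℕ) :
    (x + s) ^ ((s : ℤ) - 1) = x⁻¹ * abelA s x := by
  cases s with
  | zero => simp
  | succ k =>
    have : ((k + 1 : ℕ) : ℤ) - 1 = (k : ℤ) := by push_cast; ring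
    rw [this, zpow_natCast, abelA_succ, inv_mul_cancel_left₀ hx]
    norm_num

/-- Abel's multinomial theorem, special instance `p₁ = ⋯ = pₘ = -1`:
`∑_{s ⊨ n} binom(n; s) ∏ⱼ (xⱼ+sⱼ)^(sⱼ-1)
  = (x₁⋯xₘ)⁻¹ (x₁+⋯+xₘ)(x₁+⋯+xₘ+n)^(n-1)`. -/
theorem abel_multinomial_all_neg_one (m n : ℕ) (hm : 0 < m)
    (x : Fin m → ℝ) (hx : ∀ j, 0 < x j) :
    ∑ s ∈ Finset.Nat.antidiagonalTuple m n,
        (Nat.multinomial Finset.univ s : ℝ) * ∏ j, (x j + s j) ^ ((s j : ℤ) - 1) =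
      (∏ j, x j)⁻¹ * (∑ j, x j) * (∑ j, x j + n) ^ ((n : ℤ) - 1) := by
  have hxne : ∀ j, x j ≠ 0 := fun j => (hx j).ne'
  have hXpos : 0 < ∑ j, x j := by
    haveI : Nonempty (Fin m) := Fin.pos_iff_nonempty.mp hm
    exact Finset.sum_pos (fun j _ => hx j) Finset.univ_nonempty
  have hterm : ∀ s : Fin m → ℕ,
      (∏ j, (x j + s j) ^ ((s j : ℤ) - 1)) = (∏ j, x j)⁻¹ * ∏ j, abelA (s j) (x j) := by
    intro s
    rw [← Finset.prod_inv_distrib, ← Finset.prod_mul_distrib]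
    exact Finset.prod_congr rfl fun j _ => zpow_eq_inv_mul_abelA (hxne j) (s j)
  have hLHS : ∑ s ∈ Finset.Nat.antidiagonalTuple m n,
      (Nat.multinomial Finset.univ s : ℝ) * ∏ j, (x j + s j) ^ ((s j : ℤ) - 1)
      = (∏ j, x j)⁻¹ * abelA n (∑ j, x j) := by
    rw [← abelA_multinomial m n x, Finset.mul_sum]
    exact Finset.sum_congr rfl fun s _ => by rw [hterm s]; ring
  rw [hLHS, mul_assoc]
  congr 1
  rw [zpow_eq_inv_mul_abelA hXpos.ne' n, mul_inv_cancel_left₀ hXpos.ne']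
end

section
/- Abel's multinomial recurrence: A_n(x₁,...,xₘ; p₁,...,pₘ) = ∑_{i=1}^m A_{n−1}(x₁,...,xᵢ+1,...,xₘ; p₁,...,pᵢ+1,...,pₘ), where only the i-th arguments are incremented. -/
lemma mult_key {m : ℕ} (s : Fin m → ℕ) (i : Fin m) (hi : s i ≠ 0) :
    (∑ j, s j) * Nat.multinomial Finset.univ (Function.update s i (s i - 1)) =
      s i * Nat.multinomial Finset.univ s := by
  set s' := Function.update s i (s i - 1) with hs'
  have hP : 0 < ∏ j, (s j).factorial := Finset.prod_pos fun j _ => Nat.factorial_pos _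
  apply Nat.eq_of_mul_eq_mul_right hP
  have hprod : ∏ j, (s j).factorial = s i * ∏ j, (s' j).factorial := by
    have : (fun j => (s' j).factorial) = Function.update (fun j => (s j).factorial) i ((s i - 1).factorial) := by
      funext j
      by_cases h : j = i
      · subst h; simp [hs']
      · simp [hs', Function.update_of_ne h]
    rw [this, Finset.prod_update_of_mem (Finset.mem_univ i),
      ← Finset.mul_prod_erase Finset.univ _ (Finset.mem_univ i),
      Finset.sdiff_singleton_eq_erase, ← mul_assoc,
      Nat.mul_factorial_pred hi]
  have hsum : ∑ j, s' j = (∑ j, s j) - 1 := by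
    have h1 : ∑ j, s' j = (s i - 1) + ∑ j ∈ Finset.univ.erase i, s j := by
      rw [← Finset.add_sum_erase Finset.univ s' (Finset.mem_univ i)]
      congr 1
      · simp [hs']
      · exact Finset.sum_congr rfl fun j hj => by
          simp [hs', Function.update_of_ne (Finset.mem_erase.mp hj).1]
    have h2 : ∑ j, s j = s i + ∑ j ∈ Finset.univ.erase i, s j :=
      (Finset.add_sum_erase Finset.univ s (Finset.mem_univ i)).symm
    omega
  have hspec : (∏ j, (s j).factorial) * Nat.multinomial Finset.univ s = (∑ j, s j).factorial :=
    Nat.multinomial_spec _ _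
  have hspec' : (∏ j, (s' j).factorial) * Nat.multinomial Finset.univ s' = (∑ j, s' j).factorial :=
    Nat.multinomial_spec _ _
  have hN : 0 < ∑ j, s j := by
    calc 0 < s i := Nat.pos_of_ne_zero hi
    _ ≤ ∑ j, s j := Finset.single_le_sum (fun j _ => Nat.zero_le _) (Finset.mem_univ i)
  calc (∑ j, s j) * Nat.multinomial Finset.univ s' * ∏ j, (s j).factorial
      = s i * ((∑ j, s j) * ((∏ j, (s' j).factorial) * Nat.multinomial Finset.univ s')) := by
        rw [hprod]; ring
    _ = s i * ((∑ j, s j) * ((∑ j, s j) - 1).factorial) := by rw [hspec', hsum]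
    _ = s i * (∑ j, s j).factorial := by rw [Nat.mul_factorial_pred hN.ne']
    _ = s i * Nat.multinomial Finset.univ s * ∏ j, (s j).factorial := by
        rw [mul_assoc, mul_comm (Nat.multinomial _ _), hspec]

lemma sum_update_succ {m : ℕ} (t : Fin m → ℕ) (i : Fin m) :
    ∑ j, Function.update t i (t i + 1) j = (∑ j, t j) + 1 := by
  rw [Finset.sum_update_of_mem (Finset.mem_univ i), Finset.sdiff_singleton_eq_erase]
  have := (Finset.add_sum_erase Finset.univ t (Finset.mem_univ i)).symm
  omega

/-- Abel's multinomial `A_n(x₁,...,xₘ; p₁,...,pₘ) = ∑_{s ⊨ n} binom(n;s) ∏ⱼ (xⱼ+sⱼ)^(sⱼ+pⱼ)`. -/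
noncomputable def AbelA (n : ℕ) {m : ℕ} (x : Fin m → ℝ) (p : Fin m → ℤ) : ℝ :=
  ∑ s ∈ Finset.Nat.antidiagonalTuple m n,
    (Nat.multinomial Finset.univ s : ℝ) * ∏ j, (x j + s j) ^ ((s j : ℤ) + p j)

/-- Abel's multinomial recurrence:
`A_n(x; p) = ∑ᵢ A_{n-1}(x₁,...,xᵢ+1,...,xₘ; p₁,...,pᵢ+1,...,pₘ)`. -/
theorem abel_multinomial_recurrence (n m : ℕ) (hn : 0 < n)
    (x : Fin m → ℝ) (hx : ∀ j, 0 < x j) (p : Fin m → ℤ) :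
    AbelA n x p =
      ∑ i : Fin m, AbelA (n - 1) (Function.update x i (x i + 1))
        (Function.update p i (p i + 1)) := by
  have hn0 : (n : ℝ) ≠ 0 := Nat.cast_ne_zero.mpr hn.ne'
  have step1 : ∀ i : Fin m,
      AbelA (n - 1) (Function.update x i (x i + 1)) (Function.update p i (p i + 1)) =
        ∑ s ∈ Finset.Nat.antidiagonalTuple m n,
          (s i : ℝ) / n * (Nat.multinomial Finset.univ s : ℝ) *
            ∏ j, (x j + s j) ^ ((s j : ℤ) + p j) := by
    intro i
    unfold AbelA
    have hfilter :
        ∑ s ∈ Finset.Nat.antidiagonalTuple m n,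
            (s i : ℝ) / n * (Nat.multinomial Finset.univ s : ℝ) *
              ∏ j, (x j + s j) ^ ((s j : ℤ) + p j) =
          ∑ s ∈ (Finset.Nat.antidiagonalTuple m n).filter (fun s => s i ≠ 0),
            (s i : ℝ) / n * (Nat.multinomial Finset.univ s : ℝ) *
              ∏ j, (x j + s j) ^ ((s j : ℤ) + p j) := by
      refine (Finset.sum_filter_of_ne ?_).symm
      intro s _ hF hsi
      apply hF
      rw [hsi]
      simp
    rw [hfilter]
    apply Finset.sum_nbij' (i := fun t => Function.update t i (t i + 1))
      (j := fun s => Function.update s i (s i - 1))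
    · intro t ht
      rw [Finset.Nat.mem_antidiagonalTuple] at ht
      rw [Finset.mem_filter, Finset.Nat.mem_antidiagonalTuple, sum_update_succ]
      refine ⟨by omega, by simp⟩
    · intro s hs
      rw [Finset.mem_filter, Finset.Nat.mem_antidiagonalTuple] at hs
      rw [Finset.Nat.mem_antidiagonalTuple]
      have hsi := hs.2
      have h1 : ∑ j, Function.update (Function.update s i (s i - 1)) i
          ((Function.update s i (s i - 1)) i + 1) j = (∑ j, Function.update s i (s i - 1) j) + 1 :=
        sum_update_succ _ i
      have h2 : Function.update (Function.update s i (s i - 1)) i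
          ((Function.update s i (s i - 1)) i + 1) = s := by
        funext j
        by_cases h : j = i
        · subst h; simp; omega
        · simp [Function.update_of_ne h]
      rw [h2] at h1
      rw [hs.1] at h1
      omega
    · intro t _
      funext j
      by_cases h : j = i
      · subst h; simp
      · simp [Function.update_of_ne h]
    · intro s hs
      rw [Finset.mem_filter] at hs
      funext j
      by_cases h : j = i
      · subst h; simp; omega
      · simp [Function.update_of_ne h]
    · intro t ht
      rw [Finset.Nat.mem_antidiagonalTuple] at ht
      set s : Fin m → ℕ := Function.update t i (t i + 1) with hsdef
      have hsi : s i ≠ 0 := by simp [hsdef]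
      have hsum : ∑ j, s j = n := by rw [hsdef, sum_update_succ]; omega
      have hback : Function.update s i (s i - 1) = t := by
        funext j
        by_cases h : j = i
        · subst h; simp [hsdef]
        · simp [hsdef, Function.update_of_ne h]
      have hkey := mult_key s i hsi
      rw [hsum, hback] at hkey
      have hco : ((Nat.multinomial Finset.univ t : ℕ) : ℝ) =
          (s i : ℝ) / n * (Nat.multinomial Finset.univ s : ℝ) := by
        field_simp
        rw [mul_comm]; exact_mod_cast hkey
      rw [hco]
      congr 1
      apply Finset.prod_congr rfl
      intro j _
      by_cases h : j = i
      · subst h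
        simp only [Function.update_self, hsdef]
        rw [show (x j + 1 + (t j : ℝ)) = x j + ((t j + 1 : ℕ) : ℝ) by push_cast; ring,
          show ((t j : ℤ) + (p j + 1)) = (((t j + 1 : ℕ) : ℤ) + p j) by push_cast; ring]
      · simp [hsdef, Function.update_of_ne h]
  rw [Finset.sum_congr rfl (fun i _ => step1 i), Finset.sum_comm]
  unfold AbelA
  apply Finset.sum_congr rfl
  intro s hs
  rw [Finset.Nat.mem_antidiagonalTuple] at hs
  rw [← Finset.sum_mul, ← Finset.sum_mul, ← Finset.sum_div]
  have : (∑ i : Fin m, (s i : ℝ)) = n := by exact_mod_cast congrArg (Nat.cast : ℕ → ℝ) hs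
  rw [this, div_self hn0, one_mul]
end

section
/- The tree function F(z) = ∑_{s≥0} z^s (s+1)^(s−1)/s! satisfies F(x e^(−x)) = e^x for 0 ≤ x < 1, and its derivative satisfies F'(x e^(−x)) = e^(2x)/(1−x). -/
open Finset Real Filter Topology

lemma altsum (n : ℕ) : ∀ m < n, ∀ c : ℝ,
    ∑ k ∈ range (n+1), (-1:ℝ)^k * (n.choose k) * ((k:ℝ)+c)^m = 0 := by
  induction n with
  | zero => intro m hm; omega
  | succ n ih =>
    intro m hm c
    have step1 : ∑ k ∈ range (n+2), (-1:ℝ)^k * ((n+1).choose k) * ((k:ℝ)+c)^m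
        = ∑ j ∈ range (n+1), (-1:ℝ)^j * (n.choose j) *
            (((j:ℝ)+c)^m - (((j:ℝ)+c)+1)^m) := by
      rw [Finset.sum_range_succ' (fun k => (-1:ℝ)^k * ((n+1).choose k) * ((k:ℝ)+c)^m)]
      have merge : (∑ j ∈ range (n+1),
            (fun k => (-1:ℝ)^k * (n.choose k) * ((k:ℝ)+c)^m) (j+1))
            + (fun k => (-1:ℝ)^k * (n.choose k) * ((k:ℝ)+c)^m) 0
          = ∑ k ∈ range (n+1), (-1:ℝ)^k * (n.choose k) * ((k:ℝ)+c)^m := by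
        rw [← Finset.sum_range_succ' (fun k => (-1:ℝ)^k * (n.choose k) * ((k:ℝ)+c)^m)]
        rw [Finset.sum_range_succ]
        simp [Nat.choose_succ_self]
      simp only at merge
      have e1 : ∀ j ∈ range (n+1),
          (-1:ℝ)^(j+1) * ((n+1).choose (j+1)) * (((j+1:ℕ):ℝ)+c)^m
          = (-1:ℝ)^(j+1) * (n.choose j) * (((j+1:ℕ):ℝ)+c)^m
            + (-1:ℝ)^(j+1) * (n.choose (j+1)) * (((j+1:ℕ):ℝ)+c)^m := by
        intro j _
        rw [Nat.choose_succ_succ]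
        push_cast
        ring
      simp only [Nat.choose_zero_right] at merge ⊢
      rw [Finset.sum_congr rfl e1, Finset.sum_add_distrib, add_assoc, merge]
      push_cast
      rw [← Finset.sum_add_distrib]
      apply Finset.sum_congr rfl
      intro j _
      ring
    have step2 : ∀ j : ℕ, ((j:ℝ)+c)^m - (((j:ℝ)+c)+1)^m
        = -∑ i ∈ range m, (((j:ℝ)+c)^i * (m.choose i : ℕ)) := by
      intro j
      have := add_pow ((j:ℝ)+c) 1 m
      simp only [one_pow, mul_one] at this
      rw [this, Finset.sum_range_succ]
      simp
    rw [step1]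
    have key : ∀ j ∈ range (n+1), (-1:ℝ)^j * (n.choose j) * (((j:ℝ)+c)^m - (((j:ℝ)+c)+1)^m)
        = -∑ i ∈ range m, (m.choose i : ℝ) * ((-1:ℝ)^j * (n.choose j) * ((j:ℝ)+c)^i) := by
      intro j _
      rw [step2 j, mul_neg, neg_inj, Finset.mul_sum]
      apply Finset.sum_congr rfl
      intro i _
      ring
    rw [Finset.sum_congr rfl key, Finset.sum_neg_distrib, Finset.sum_comm, neg_eq_zero]
    apply Finset.sum_eq_zero
    intro i hi
    rw [← Finset.mul_sum, ih i (by simp at hi; omega) c, mul_zero]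


lemma abel_identity (n : ℕ) : ∀ y : ℝ,
    ∑ k ∈ range (n+1), (n.choose k : ℝ) * ((k:ℝ)+1)^(k-1) * (y + ((n-k : ℕ):ℝ))^(n-k)
      = (y + n + 1)^n := by
  induction n with
  | zero => intro y; simp
  | succ n ih =>
    intro y
    set f : ℝ → ℝ := fun y => ∑ k ∈ range (n+2),
      ((n+1).choose k : ℝ) * ((k:ℝ)+1)^(k-1) * (y + ((n+1-k : ℕ):ℝ))^(n+1-k) with hfdef
    set g : ℝ → ℝ := fun y => (y + (n+1) + 1)^(n+1) with hgdef
    have hf : ∀ y : ℝ, HasDerivAt f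
        (∑ k ∈ range (n+2), ((n+1).choose k : ℝ) * ((k:ℝ)+1)^(k-1) *
          ((n+1-k : ℕ) * (y + ((n+1-k : ℕ):ℝ))^(n+1-k-1))) y := by
      intro y
      apply HasDerivAt.fun_sum
      intro k _
      have h1 : HasDerivAt (fun y : ℝ => (y + ((n+1-k : ℕ):ℝ))^(n+1-k))
          ((n+1-k : ℕ) * (y + ((n+1-k : ℕ):ℝ))^(n+1-k-1)) y := by
        have := (hasDerivAt_pow (n+1-k) (y + ((n+1-k : ℕ):ℝ))).comp y
          ((hasDerivAt_id y).add_const ((n+1-k : ℕ):ℝ))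
        exact this.congr_deriv (by simp)
      simpa [mul_assoc] using h1.const_mul (((n+1).choose k : ℝ) * ((k:ℝ)+1)^(k-1))
    have hderiv : ∀ y : ℝ, (∑ k ∈ range (n+2), ((n+1).choose k : ℝ) * ((k:ℝ)+1)^(k-1) *
          ((n+1-k : ℕ) * (y + ((n+1-k : ℕ):ℝ))^(n+1-k-1)))
        = ((n:ℝ)+1) * (y + (n:ℝ) + 2)^(n+1-1) := by
      intro y
      rw [Finset.sum_range_succ]
      have last0 : ((n+1).choose (n+1) : ℝ) * (((n+1:ℕ):ℝ)+1)^(n+1-1) *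
          ((n+1-(n+1) : ℕ) * (y + ((n+1-(n+1) : ℕ):ℝ))^(n+1-(n+1)-1)) = 0 := by
        simp
      rw [last0, add_zero]
      have e : ∀ k ∈ range (n+1), ((n+1).choose k : ℝ) * ((k:ℝ)+1)^(k-1) *
            ((n+1-k : ℕ) * (y + ((n+1-k : ℕ):ℝ))^(n+1-k-1))
          = ((n:ℝ)+1) * ((n.choose k : ℝ) * ((k:ℝ)+1)^(k-1) *
            ((y+1) + ((n-k : ℕ):ℝ))^(n-k)) := by
        intro k hk
        rw [Finset.mem_range] at hk
        have hk' : k ≤ n := by omega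
        have hc : ((n+1).choose k : ℝ) * ((n+1-k : ℕ):ℝ) = ((n:ℝ)+1) * (n.choose k : ℝ) := by
          have := Nat.choose_mul_succ_eq n k
          have : (n.choose k * (n+1) : ℝ) = ((n+1).choose k : ℝ) * ((n+1-k : ℕ):ℝ) := by
            exact_mod_cast congrArg (Nat.cast : ℕ → ℝ) this
          rw [← this]; ring
        have h2 : (n+1-k : ℕ) - 1 = n - k := by omega
        have h3 : ((n+1-k : ℕ):ℝ) = ((n-k:ℕ):ℝ) + 1 := by
          have : n+1-k = (n-k)+1 := by omega
          rw [this]; push_cast; ring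
        rw [h3] at hc
        rw [h2, h3, show y + (((n-k:ℕ):ℝ)+1) = (y+1)+((n-k:ℕ):ℝ) by ring]
        linear_combination (((k:ℝ)+1)^(k-1) * ((y+1) + ((n-k:ℕ):ℝ))^(n-k)) * hc
      rw [Finset.sum_congr rfl e, ← Finset.mul_sum, ih (y+1)]
      have : (n+1-1) = n := by omega
      rw [this]
      push_cast
      ring_nf
    -- g has the same derivative
    have hg : ∀ y : ℝ, HasDerivAt g (((n:ℝ)+1) * (y + (n:ℝ) + 2)^(n+1-1)) y := by
      intro y
      have h := (((hasDerivAt_id y).add_const ((n:ℝ)+1)).add_const 1).pow (n+1)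
      simp only [hgdef]
      refine h.congr_deriv ?_
      simp only [id_eq]
      push_cast
      ring_nf
    have hfg : ∀ z : ℝ, f z - g z = f (-(n+2)) - g (-(n+2)) := by
      intro z
      have hd : Differentiable ℝ (fun z => f z - g z) := by
        intro z
        exact (((hf z).sub (hg z)).congr_deriv (by rw [hderiv z])).differentiableAt
      have h0 : ∀ z : ℝ, deriv (fun z => f z - g z) z = 0 := by
        intro z
        have : HasDerivAt (fun z => f z - g z) 0 z := by
          have := (hf z).sub (hg z)
          rwa [hderiv z, sub_self] at this
        exact this.deriv
      exact is_const_of_deriv_eq_zero hd h0 z _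
    have hfval : f (-(n+2)) = 0 := by
      simp only [hfdef]
      have e2 : ∀ k ∈ range (n+2),
          ((n+1).choose k : ℝ) * ((k:ℝ)+1)^(k-1) * ((-(n+2):ℝ) + ((n+1-k : ℕ):ℝ))^(n+1-k)
          = (-1:ℝ)^(n+1) * ((-1:ℝ)^k * ((n+1).choose k : ℝ) * ((k:ℝ)+1)^n) := by
        intro k hk
        rw [Finset.mem_range] at hk
        have hb : ((-(n+2):ℝ) + ((n+1-k : ℕ):ℝ)) = -(((k:ℝ)+1)) := by
          have : (n+1-k : ℕ) = n+1-k := rfl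
          have h6 : ((n+1-k : ℕ):ℝ) = ((n:ℝ)+1) - k := by
            have h7 : ((n+1-k) + k : ℕ) = n+1 := by omega
            have := congrArg (Nat.cast : ℕ → ℝ) h7
            push_cast at this
            linarith
          rw [h6]; ring
        rw [hb, neg_pow]
        have hsign : (-1:ℝ)^(n+1-k) = (-1:ℝ)^(n+1) * (-1:ℝ)^k := by
          have h8 : (-1:ℝ)^(n+1-k) * (-1:ℝ)^k = (-1:ℝ)^(n+1) := by
            rw [← pow_add]; congr 1; omega
          have h9 : (-1:ℝ)^k * (-1:ℝ)^k = 1 := by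
            rw [← pow_add]; exact Even.neg_one_pow ⟨k, rfl⟩
          calc (-1:ℝ)^(n+1-k) = (-1:ℝ)^(n+1-k) * ((-1:ℝ)^k * (-1:ℝ)^k) := by rw [h9, mul_one]
            _ = ((-1:ℝ)^(n+1-k) * (-1:ℝ)^k) * (-1:ℝ)^k := by ring
            _ = (-1:ℝ)^(n+1) * (-1:ℝ)^k := by rw [h8]
        have hpow : ((k:ℝ)+1)^(k-1) * ((k:ℝ)+1)^(n+1-k) = ((k:ℝ)+1)^n := by
          rcases Nat.eq_zero_or_pos k with hk0 | hk0
          · subst hk0; norm_num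
          · rw [← pow_add]; congr 1; omega
        calc ((n+1).choose k : ℝ) * ((k:ℝ)+1)^(k-1) * ((-1:ℝ)^(n+1-k) * ((k:ℝ)+1)^(n+1-k))
            = (-1:ℝ)^(n+1-k) * (((n+1).choose k : ℝ) * (((k:ℝ)+1)^(k-1) * ((k:ℝ)+1)^(n+1-k))) := by
              ring
          _ = (-1:ℝ)^(n+1) * ((-1:ℝ)^k * ((n+1).choose k : ℝ) * ((k:ℝ)+1)^n) := by
              rw [hsign, hpow]; ring
      rw [Finset.sum_congr rfl e2, ← Finset.mul_sum]
      have := altsum (n+1) n (by omega) 1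
      rw [this, mul_zero]
    have hgval : g (-(n+2)) = 0 := by
      simp only [hgdef]
      rw [show ((-(n+2):ℝ) + (n+1) + 1) = 0 by push_cast; ring]
      exact zero_pow (by omega)
    have := hfg y
    rw [hfval, hgval] at this
    have : f y = g y := by linarith
    calc ∑ k ∈ range (n+1+1), ((n+1).choose k : ℝ) * ((k:ℝ)+1)^(k-1) *
          (y + ((n+1-k : ℕ):ℝ))^(n+1-k) = f y := by rw [hfdef]
      _ = g y := this
      _ = (y + ((n+1:ℕ):ℝ) + 1)^(n+1) := by rw [hgdef]; push_cast; ring_nf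


noncomputable def aa (s : ℕ) : ℝ := (((s + 1) ^ (s - 1) : ℕ) : ℝ) / (s.factorial : ℝ)

lemma aa_nonneg (s : ℕ) : 0 ≤ aa s := by
  unfold aa; positivity

lemma coeffrec (n : ℕ) :
    ∑ k ∈ range (n+1), (((n-k:ℕ):ℝ)+1) * aa k * aa (n-k) = ((n:ℝ)+1) * aa (n+1) := by
  have h := abel_identity n 1
  have hfac : (n.factorial : ℝ) ≠ 0 := by positivity
  have key : ∀ k ∈ range (n+1),
      (((n-k:ℕ):ℝ)+1) * aa k * aa (n-k) * (n.factorial : ℝ)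
      = (n.choose k : ℝ) * ((k:ℝ)+1)^(k-1) * ((1:ℝ) + ((n-k : ℕ):ℝ))^(n-k) := by
    intro k hk
    rw [Finset.mem_range] at hk
    have hk' : k ≤ n := by omega
    have hch : ((n.choose k : ℕ) * k.factorial * (n-k).factorial : ℝ) = (n.factorial : ℝ) := by
      exact_mod_cast congrArg (Nat.cast : ℕ → ℝ) (Nat.choose_mul_factorial_mul_factorial hk')
    have hak : aa k * (k.factorial : ℝ) = ((k:ℝ)+1)^(k-1) := by
      unfold aa
      have : (k.factorial : ℝ) ≠ 0 := by positivity
      field_simp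
      push_cast; ring
    have hank : (((n-k:ℕ):ℝ)+1) * aa (n-k) * ((n-k).factorial : ℝ)
        = ((1:ℝ) + ((n-k : ℕ):ℝ))^(n-k) := by
      unfold aa
      have h2 : ((n-k).factorial : ℝ) ≠ 0 := by positivity
      set j := n - k
      have : ((((j:ℕ)+1) ^ (j - 1) : ℕ) : ℝ) = ((j:ℝ)+1)^(j-1) := by push_cast; ring
      rw [this]
      field_simp
      rcases Nat.eq_zero_or_pos j with hj | hj
      · rw [hj]; norm_num
      · rw [show ((j:ℝ)+1)*((j:ℝ)+1)^(j-1) = ((j:ℝ)+1)^(j-1+1) by rw [pow_succ]; ring,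
          show j - 1 + 1 = j by omega, show (1:ℝ) + (j:ℝ) = (j:ℝ)+1 by ring]
    calc (((n-k:ℕ):ℝ)+1) * aa k * aa (n-k) * (n.factorial : ℝ)
        = (aa k * k.factorial) * ((((n-k:ℕ):ℝ)+1) * aa (n-k) * (n-k).factorial)
          * (n.choose k : ℝ) := by rw [← hch]; push_cast; ring
      _ = (n.choose k : ℝ) * ((k:ℝ)+1)^(k-1) * ((1:ℝ) + ((n-k : ℕ):ℝ))^(n-k) := by
          rw [hak, hank]; ring
  have lhs : (∑ k ∈ range (n+1), (((n-k:ℕ):ℝ)+1) * aa k * aa (n-k)) * (n.factorial : ℝ)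
      = ((1:ℝ) + n + 1)^n := by
    rw [Finset.sum_mul, Finset.sum_congr rfl key, h]
  have rhs : (((n:ℝ)+1) * aa (n+1)) * (n.factorial : ℝ) = ((1:ℝ) + n + 1)^n := by
    unfold aa
    have h3 : ((n+1).factorial : ℝ) = ((n:ℝ)+1) * n.factorial := by
      rw [Nat.factorial_succ]; push_cast; ring
    rw [h3]
    field_simp
    push_cast
    ring
  have := lhs.trans rhs.symm
  exact mul_right_cancel₀ hfac this


lemma aa_le (s : ℕ) : aa s ≤ Real.exp 1 ^ (s+1) := by
  have hx : (0:ℝ) ≤ (s:ℝ)+1 := by positivity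
  have h1 : (((s:ℝ))+1) ^ (s+1) / ((s+1).factorial : ℝ) ≤ Real.exp ((s:ℝ)+1) := by
    have := Real.sum_le_exp_of_nonneg hx (s+2)
    calc ((s:ℝ)+1) ^ (s+1) / ((s+1).factorial : ℝ)
        = ((s:ℝ)+1) ^ (s+1) / ((s+1).factorial : ℝ) := rfl
      _ ≤ ∑ i ∈ range (s+2), ((s:ℝ)+1) ^ i / (i.factorial : ℝ) := by
          exact Finset.single_le_sum (f := fun i => ((s:ℝ)+1) ^ i / (i.factorial : ℝ)) (a := s+1)
            (fun i _ => by positivity) (show s+1 ∈ range (s+2) from Finset.mem_range.mpr (by omega))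
      _ ≤ Real.exp ((s:ℝ)+1) := by simpa using this
  have h2 : aa s ≤ ((s:ℝ)+1) ^ (s+1) / ((s+1).factorial : ℝ) := by
    unfold aa
    have hf : ((s+1).factorial : ℝ) = ((s:ℝ)+1) * (s.factorial : ℝ) := by
      rw [Nat.factorial_succ]; push_cast; ring
    have hnum : (((s + 1) ^ (s - 1) : ℕ) : ℝ) = ((s:ℝ)+1) ^ (s-1) := by push_cast; ring
    rw [hnum, hf]
    rw [div_le_div_iff₀ (by positivity) (by positivity)]
    have hpow : ((s:ℝ)+1) ^ (s-1) * ((s:ℝ)+1) * ((s:ℝ)+1) = ((s:ℝ)+1) ^ (s+1) := by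
      rcases s with _ | t
      · norm_num
      · simp only [Nat.add_sub_cancel]
        rw [← pow_succ, ← pow_succ]
    calc ((s:ℝ)+1) ^ (s-1) * (((s:ℝ)+1) * (s.factorial:ℝ))
        = (((s:ℝ)+1) ^ (s-1) * ((s:ℝ)+1)) * (s.factorial:ℝ) := by ring
      _ ≤ (((s:ℝ)+1) ^ (s-1) * ((s:ℝ)+1) * ((s:ℝ)+1)) * (s.factorial:ℝ) := by
          have h3 : (1:ℝ) ≤ (s:ℝ)+1 := by linarith [Nat.cast_nonneg (α := ℝ) s]
          have hA : (0:ℝ) ≤ ((s:ℝ)+1)^(s-1) * ((s:ℝ)+1) := by positivity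
          have hfct : (0:ℝ) ≤ (s.factorial : ℝ) := by positivity
          nlinarith [mul_nonneg (mul_nonneg hA hfct) (sub_nonneg.mpr h3)]
      _ = ((s:ℝ)+1) ^ (s+1) * (s.factorial:ℝ) := by rw [hpow]
  refine h2.trans (h1.trans_eq ?_)
  rw [← Real.exp_nat_mul]
  · push_cast; ring_nf

/-- The tree function `F(z) = ∑_{s ≥ 0} (s+1)^(s-1) z^s / s!`. -/
noncomputable def treeF (z : ℝ) : ℝ :=
  ∑' s : ℕ, (((s + 1) ^ (s - 1) : ℕ) : ℝ) * z ^ s / (s.factorial : ℝ)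

lemma treeF_eq (z : ℝ) : treeF z = ∑' s, aa s * z ^ s := by
  unfold treeF aa
  congr 1
  funext s
  ring

lemma q_lt_one {z : ℝ} (h : |z| < Real.exp (-1)) : Real.exp 1 * |z| < 1 := by
  have h2 : Real.exp 1 * |z| < Real.exp 1 * Real.exp (-1) :=
    (mul_lt_mul_iff_right₀ (Real.exp_pos 1)).mpr h
  rwa [← Real.exp_add, add_neg_cancel, Real.exp_zero] at h2

lemma abs_term_le (s : ℕ) (z : ℝ) : |aa s * z ^ s| ≤ Real.exp 1 * (Real.exp 1 * |z|) ^ s := by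
  rw [abs_mul, abs_of_nonneg (aa_nonneg s), abs_pow, mul_pow, ← mul_assoc]
  rw [show Real.exp 1 * Real.exp 1 ^ s = Real.exp 1 ^ (s+1) by rw [pow_succ]; ring]
  apply mul_le_mul_of_nonneg_right (aa_le s) (by positivity)

lemma summable_aa_abs (z : ℝ) (h : |z| < Real.exp (-1)) :
    Summable (fun s => |aa s * z ^ s|) := by
  apply Summable.of_nonneg_of_le (fun s => abs_nonneg _) (fun s => abs_term_le s z)
  exact (summable_geometric_of_lt_one (by positivity) (q_lt_one h)).mul_left _

lemma summable_aa (z : ℝ) (h : |z| < Real.exp (-1)) : Summable (fun s => aa s * z ^ s) :=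
  (summable_aa_abs z h).of_abs

lemma abs_sterm_le (s : ℕ) (z : ℝ) :
    |(s:ℝ) * aa s * z ^ s| ≤ Real.exp 1 * ((s:ℝ) * (Real.exp 1 * |z|) ^ s) := by
  rw [abs_mul, abs_mul, abs_of_nonneg (aa_nonneg s), abs_pow, mul_pow,
    Nat.abs_cast]
  calc (s:ℝ) * aa s * |z| ^ s ≤ (s:ℝ) * Real.exp 1 ^ (s+1) * |z| ^ s := by
        apply mul_le_mul_of_nonneg_right _ (by positivity)
        exact mul_le_mul_of_nonneg_left (aa_le s) (by positivity)
    _ = Real.exp 1 * ((s:ℝ) * (Real.exp 1 ^ s * |z| ^ s)) := by rw [pow_succ]; ring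
lemma summable_saa_abs (z : ℝ) (h : |z| < Real.exp (-1)) :
    Summable (fun s : ℕ => |(s:ℝ) * aa s * z ^ s|) := by
  apply Summable.of_nonneg_of_le (fun s => abs_nonneg _) (fun s => abs_sterm_le s z)
  apply Summable.mul_left
  have := summable_pow_mul_geometric_of_norm_lt_one (R := ℝ) 1
    (r := Real.exp 1 * |z|) (by rw [Real.norm_eq_abs, abs_of_nonneg (by positivity)]; exact q_lt_one h)
  simpa using this

lemma summable_saa (z : ℝ) (h : |z| < Real.exp (-1)) :
    Summable (fun s : ℕ => (s:ℝ) * aa s * z ^ s) := (summable_saa_abs z h).of_abs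

lemma summable_dd_abs (z : ℝ) (h : |z| < Real.exp (-1)) :
    Summable (fun s : ℕ => |(s:ℝ) * aa s * z ^ (s-1)|) := by
  set m : ℝ := (|z| + Real.exp (-1))/2 with hm
  have hz0 : 0 ≤ |z| := abs_nonneg z
  have hmpos : 0 < m := by rw [hm]; positivity
  have hzm : |z| ≤ m := by rw [hm]; linarith
  have hmlt : |m| < Real.exp (-1) := by rw [abs_of_pos hmpos, hm]; linarith
  have key : ∀ s : ℕ, |(s:ℝ) * aa s * z ^ (s-1)| ≤ (1/m) * ((s:ℝ) * aa s * m ^ s) := by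
    intro s
    cases s with
    | zero => simp
    | succ n =>
      rw [abs_mul, abs_mul, abs_pow, Nat.abs_cast, abs_of_nonneg (aa_nonneg _),
        Nat.add_sub_cancel]
      have h1 : |z| ^ n ≤ m ^ n := pow_le_pow_left₀ hz0 hzm n
      have h2 : ((n+1:ℕ):ℝ) * aa (n+1) * |z| ^ n ≤ ((n+1:ℕ):ℝ) * aa (n+1) * m ^ n := by
        exact mul_le_mul_of_nonneg_left h1 (mul_nonneg (by positivity) (aa_nonneg _))
      calc ((n+1:ℕ):ℝ) * aa (n+1) * |z| ^ n ≤ ((n+1:ℕ):ℝ) * aa (n+1) * m ^ n := h2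
        _ = (1/m) * (((n+1:ℕ):ℝ) * aa (n+1) * m ^ (n+1)) := by
            rw [pow_succ]; field_simp
  apply Summable.of_nonneg_of_le (fun s => abs_nonneg _) key
  exact ((summable_saa m hmlt).mul_left _)

lemma summable_dd (z : ℝ) (h : |z| < Real.exp (-1)) :
    Summable (fun s : ℕ => (s:ℝ) * aa s * z ^ (s-1)) := (summable_dd_abs z h).of_abs

noncomputable def DD (z : ℝ) : ℝ := ∑' s : ℕ, (s:ℝ) * aa s * z ^ (s-1)

lemma hasDerivAt_treeF (z : ℝ) (h : |z| < Real.exp (-1)) : HasDerivAt treeF (DD z) z := by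
  set r : ℝ := (|z| + Real.exp (-1))/2 with hr
  have hz0 : 0 ≤ |z| := abs_nonneg z
  have hrpos : 0 < r := by rw [hr]; positivity
  have hzr : |z| < r := by rw [hr]; linarith
  have hrlt : |r| < Real.exp (-1) := by rw [abs_of_pos hrpos, hr]; linarith
  have hmain : HasDerivAt (fun y => ∑' s : ℕ, aa s * y ^ s) (DD z) z := by
    apply hasDerivAt_tsum_of_isPreconnected
      (u := fun s : ℕ => (s:ℝ) * aa s * r ^ (s-1))
      (summable_dd r hrlt |>.congr (fun s => rfl))
      (Metric.isOpen_ball) (Convex.isPreconnected (convex_ball (0:ℝ) r))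
      (g := fun n y => aa n * y ^ n) (g' := fun (n : ℕ) (y : ℝ) => (n:ℝ) * aa n * y ^ (n-1))
      (y₀ := 0)
    · intro n y _
      have := (hasDerivAt_pow n y).const_mul (aa n)
      refine this.congr_deriv ?_
      ring
    · intro n y hy
      rw [Metric.mem_ball, Real.dist_eq, sub_zero] at hy
      rw [Real.norm_eq_abs, abs_mul, abs_mul, abs_pow, Nat.abs_cast,
        abs_of_nonneg (aa_nonneg n)]
      cases n with
      | zero => simp
      | succ k =>
        apply mul_le_mul_of_nonneg_left _ (mul_nonneg (by positivity) (aa_nonneg _))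
        rw [Nat.add_sub_cancel]
        exact pow_le_pow_left₀ (abs_nonneg y) (le_of_lt hy) k
    · rw [Metric.mem_ball, Real.dist_eq, sub_zero, abs_zero]; exact hrpos
    · apply summable_aa 0
      rw [abs_zero]; exact Real.exp_pos _
    · rw [Metric.mem_ball, Real.dist_eq, sub_zero]; exact hzr
  have : treeF = fun y => ∑' s : ℕ, aa s * y ^ s := funext treeF_eq
  rw [this]
  exact hmain

lemma dd_eq (z : ℝ) (h : |z| < Real.exp (-1)) :
    DD z = treeF z * treeF z + treeF z * (z * DD z) := by
  have hSn : Summable (fun s : ℕ => ‖aa s * z ^ s‖) := by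
    simp only [Real.norm_eq_abs]; exact summable_aa_abs z h
  have hWn : Summable (fun s : ℕ => ‖(s:ℝ) * aa s * z ^ s‖) := by
    simp only [Real.norm_eq_abs]; exact summable_saa_abs z h
  have A : z * DD z = ∑' s : ℕ, (s:ℝ) * aa s * z ^ s := by
    rw [DD, ← tsum_mul_left]
    congr 1; funext s
    cases s with
    | zero => simp
    | succ n => rw [Nat.add_sub_cancel]; push_cast; ring
  have B : treeF z * treeF z
      = ∑' n : ℕ, ∑ k ∈ Finset.range (n+1), (aa k * z^k) * (aa (n-k) * z^(n-k)) := by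
    rw [treeF_eq]
    exact tsum_mul_tsum_eq_tsum_sum_range_of_summable_norm hSn hSn
  have C : treeF z * (z * DD z)
      = ∑' n : ℕ, ∑ k ∈ Finset.range (n+1),
          (aa k * z^k) * (((n-k:ℕ):ℝ) * aa (n-k) * z^(n-k)) := by
    rw [treeF_eq, A]
    exact tsum_mul_tsum_eq_tsum_sum_range_of_summable_norm hSn hWn
  have D : DD z = ∑' n : ℕ, ((n:ℝ)+1) * aa (n+1) * z^n := by
    rw [DD, Summable.tsum_eq_zero_add (summable_dd z h)]
    simp only [Nat.cast_zero, zero_mul, zero_add]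
    congr 1; funext n; rw [Nat.add_sub_cancel]; push_cast; ring
  have sum_eq : ∀ n : ℕ,
      ((∑ k ∈ Finset.range (n+1), (aa k * z^k) * (aa (n-k) * z^(n-k)))
        + ∑ k ∈ Finset.range (n+1), (aa k * z^k) * (((n-k:ℕ):ℝ) * aa (n-k) * z^(n-k)))
      = ((n:ℝ)+1) * aa (n+1) * z^n := by
    intro n
    rw [← Finset.sum_add_distrib]
    have e : ∀ k ∈ Finset.range (n+1),
        ((aa k * z^k) * (aa (n-k) * z^(n-k))
          + (aa k * z^k) * (((n-k:ℕ):ℝ) * aa (n-k) * z^(n-k)))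
        = ((((n-k:ℕ):ℝ)+1) * aa k * aa (n-k)) * z^n := by
      intro k hk
      rw [Finset.mem_range] at hk
      have hz : z^k * z^(n-k) = z^n := by rw [← pow_add]; congr 1; omega
      calc (aa k * z^k) * (aa (n-k) * z^(n-k))
            + (aa k * z^k) * (((n-k:ℕ):ℝ) * aa (n-k) * z^(n-k))
          = ((((n-k:ℕ):ℝ)+1) * aa k * aa (n-k)) * (z^k * z^(n-k)) := by ring
        _ = ((((n-k:ℕ):ℝ)+1) * aa k * aa (n-k)) * z^n := by rw [hz]
    rw [Finset.sum_congr rfl e, ← Finset.sum_mul, coeffrec n]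
  have hsum1 : Summable (fun n : ℕ =>
      ∑ k ∈ Finset.range (n+1), (aa k * z^k) * (aa (n-k) * z^(n-k))) :=
    (summable_norm_sum_mul_range_of_summable_norm hSn hSn).of_norm
  have hsum2 : Summable (fun n : ℕ =>
      ∑ k ∈ Finset.range (n+1), (aa k * z^k) * (((n-k:ℕ):ℝ) * aa (n-k) * z^(n-k))) :=
    (summable_norm_sum_mul_range_of_summable_norm hSn hWn).of_norm
  rw [B, C, ← Summable.tsum_add hsum1 hsum2, D]
  exact tsum_congr (fun n => (sum_eq n).symm)

lemma ode (z : ℝ) (h : |z| < Real.exp (-1)) :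
    DD z * (1 - z * treeF z) = treeF z * treeF z := by
  linear_combination dd_eq z h

lemma phi_deriv (x : ℝ) : HasDerivAt (fun y : ℝ => y * Real.exp (-y))
    (Real.exp (-x) * (1 - x)) x := by
  have h1 : HasDerivAt (fun y : ℝ => Real.exp (-y)) (-Real.exp (-x)) x := by
    have := (Real.hasDerivAt_exp (-x)).comp x ((hasDerivAt_id x).neg)
    exact this.congr_deriv (by ring)
  have := (hasDerivAt_id x).mul h1
  refine this.congr_deriv ?_
  simp; ring

lemma phi_nonneg {x : ℝ} (hx : 0 ≤ x) : 0 ≤ x * Real.exp (-x) :=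
  mul_nonneg hx (Real.exp_pos _).le

lemma phi_lt {x : ℝ} (hx : 0 ≤ x) (hx1 : x < 1) : x * Real.exp (-x) < Real.exp (-1) := by
  have h1 : x < Real.exp (x - 1) := by
    have := Real.add_one_lt_exp (x := x - 1) (by intro hc; apply absurd hx1; simp; linarith)
    linarith
  have h2 : x * Real.exp (-x) < Real.exp (x-1) * Real.exp (-x) :=
    (mul_lt_mul_iff_left₀ (Real.exp_pos _)).mpr h1
  calc x * Real.exp (-x) < Real.exp (x-1) * Real.exp (-x) := h2
    _ = Real.exp (-1) := by rw [← Real.exp_add]; ring_nf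

lemma phi_abs {x : ℝ} (hx : 0 ≤ x) (hx1 : x < 1) : |x * Real.exp (-x)| < Real.exp (-1) := by
  rw [abs_of_nonneg (phi_nonneg hx)]; exact phi_lt hx hx1

lemma treeF_nonneg {z : ℝ} (hz : 0 ≤ z) : 0 ≤ treeF z := by
  rw [treeF_eq]
  exact tsum_nonneg (fun s => mul_nonneg (aa_nonneg s) (pow_nonneg hz s))

lemma treeF_zero : treeF 0 = 1 := by
  rw [treeF_eq]
  rw [tsum_eq_single 0 (fun s hs => by simp [zero_pow hs])]
  simp [aa]

lemma DD_zero : DD 0 = 1 := by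
  rw [DD]
  rw [tsum_eq_single 1 ?_]
  · norm_num [aa]
  · intro s hs
    match s with
    | 0 => simp
    | (n+2) => simp [Nat.add_sub_cancel]

noncomputable def HH (x : ℝ) : ℝ := (x * Real.exp (-x)) * treeF (x * Real.exp (-x))

noncomputable def KK (x : ℝ) : ℝ := HH x * Real.exp (-(HH x)) - x * Real.exp (-x)

lemma HH_hasDeriv {x : ℝ} (hx : 0 ≤ x) (hx1 : x < 1) :
    HasDerivAt HH ((treeF (x * Real.exp (-x)) + (x * Real.exp (-x)) * DD (x * Real.exp (-x)))
      * (Real.exp (-x) * (1 - x))) x := by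
  have hball := phi_abs hx hx1
  have hTT : HasDerivAt (fun z => z * treeF z)
      (1 * treeF (x * Real.exp (-x)) + (x * Real.exp (-x)) * DD (x * Real.exp (-x)))
      (x * Real.exp (-x)) :=
    (hasDerivAt_id _).mul (hasDerivAt_treeF _ hball)
  have := hTT.comp x (phi_deriv x)
  exact this.congr_deriv (by ring)

lemma KK_hasDeriv {x : ℝ} (hx : 0 ≤ x) (hx1 : x < 1) :
    HasDerivAt KK
      ((Real.exp (-(HH x)) * (1 - HH x)) *
        ((treeF (x * Real.exp (-x)) + (x * Real.exp (-x)) * DD (x * Real.exp (-x)))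
          * (Real.exp (-x) * (1 - x)))
        - Real.exp (-x) * (1 - x)) x := by
  have h1 := HH_hasDeriv hx hx1
  have h2 : HasDerivAt (fun t : ℝ => t * Real.exp (-t)) (Real.exp (-(HH x)) * (1 - HH x))
      (HH x) := phi_deriv (HH x)
  have h3 := h2.comp x h1
  have h4 := h3.sub (phi_deriv x)
  exact h4

lemma KK_deriv_eq {x : ℝ} (hx : 0 < x) (hx1 : x < 1) :
    HasDerivAt KK (((1-x)/x) * KK x) x := by
  have h := KK_hasDeriv hx.le hx1
  refine h.congr_deriv (Eq.symm ?_)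
  have hball := phi_abs hx.le hx1
  have hode := ode _ hball
  -- TT ode: z * TT' * (1 - z * S) = z * S with z = φ x
  set z := x * Real.exp (-x) with hzdef
  set S := treeF z
  set D := DD z
  have hTTode : z * ((S + z * D) * (1 - z * S)) = z * S := by
    have : z * ((S + z * D) * (1 - z * S)) - z * S = z^2 * (D * (1 - z * S) - S * S) := by
      ring
    have h0 : D * (1 - z * S) - S * S = 0 := by rw [hode]; ring
    have := this
    rw [h0, mul_zero] at this
    linarith
  have hexp : Real.exp (-x) ≠ 0 := Real.exp_ne_zero _
  have hxne : x ≠ 0 := ne_of_gt hx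
  have hKK : KK x = z * S * Real.exp (-(z * S)) - z := by
    simp [KK, HH, hzdef]; rfl
  have hHH : HH x = z * S := by simp [HH, hzdef]; exact Or.inl rfl
  rw [hKK, hHH]
  -- goal: ((1-x)/x) * (z*S*exp(-(z*S)) - z) = exp(-(z*S))*(1-z*S)*((S+z*D)*(exp(-x)*(1-x))) - exp(-x)*(1-x)
  have hz_ne : z ≠ 0 := by
    simp only [hzdef]
    exact mul_ne_zero hxne hexp
  -- use hTTode : (S + z*D)*(1-z*S) = S  (divide by z)
  have hTT2 : (S + z * D) * (1 - z * S) = S := by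
    have := mul_left_cancel₀ hz_ne hTTode
    linarith [this]
  -- Now: RHS = exp(-(z*S)) * ((S+z*D)*(1-z*S)) * exp(-x)*(1-x) - exp(-x)*(1-x)
  --        = exp(-(z*S)) * S * exp(-x)*(1-x) - exp(-x)*(1-x)
  -- LHS = ((1-x)/x)*(z*S*exp(-(z*S)) - z); z = x*exp(-x)
  rw [hzdef] at hTT2 ⊢
  rw [div_mul_eq_mul_div, div_eq_iff hxne]
  linear_combination (-(x * Real.exp (-x) * (1-x) *
    Real.exp (-(x * Real.exp (-x) * S)))) * hTT2

lemma KK_eq_zero : ∀ x : ℝ, 0 ≤ x → x < 1 → KK x = 0 := by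
  have KK_zero : KK 0 = 0 := by simp [KK, HH]
  have KK_deriv_zero : HasDerivAt KK 0 0 := by
    have h := KK_hasDeriv (le_refl 0) one_pos
    convert h using 1
    simp [HH, treeF_zero]
  intro x hx hx1
  rcases eq_or_lt_of_le hx with heq | hx0
  · rw [← heq]; exact KK_zero
  set Q : ℝ → ℝ := fun y => KK y / (y * Real.exp (-y)) with hQdef
  have hQd : ∀ y ∈ Set.Ioo (0:ℝ) 1, HasDerivAt Q 0 y := by
    intro y hy
    have h1 := KK_deriv_eq hy.1 hy.2
    have h2 := phi_deriv y
    have hyne : y * Real.exp (-y) ≠ 0 := mul_ne_zero (ne_of_gt hy.1) (Real.exp_ne_zero _)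
    have h3 := h1.div h2 hyne
    refine h3.congr_deriv (Eq.symm ?_)
    have hy0 : y ≠ 0 := ne_of_gt hy.1
    rw [eq_comm, div_eq_iff (by positivity)]
    field_simp
    ring
  have hconst : ∀ u v : ℝ, 0 < u → u ≤ v → v < 1 → Q v = Q u := by
    intro u v hu huv hv1
    have hcont : ContinuousOn Q (Set.Icc u v) := by
      intro y hy
      have hy0 : 0 < y := lt_of_lt_of_le hu hy.1
      have hy1 : y < 1 := lt_of_le_of_lt hy.2 hv1
      exact ((hQd y ⟨hy0, hy1⟩).continuousAt).continuousWithinAt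
    have hder : ∀ y ∈ Set.Ico u v, HasDerivWithinAt Q 0 (Set.Ici y) y := by
      intro y hy
      have hy0 : 0 < y := lt_of_lt_of_le hu hy.1
      have hy1 : y < 1 := lt_trans hy.2 hv1
      exact (hQd y ⟨hy0, hy1⟩).hasDerivWithinAt
    exact constant_of_has_deriv_right_zero hcont hder v (Set.right_mem_Icc.mpr huv)
  have hslope : Tendsto (fun y => KK y / y) (𝓝[>] (0:ℝ)) (𝓝 0) := by
    have h1 := hasDerivAt_iff_tendsto_slope.mp KK_deriv_zero
    have h2 : Tendsto (slope KK 0) (𝓝[>] (0:ℝ)) (𝓝 0) :=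
      h1.mono_left (nhdsWithin_mono _ (fun y hy => ne_of_gt hy))
    refine h2.congr ?_
    intro y
    rw [slope_def_field, KK_zero]
    simp [div_eq_iff]
  have hQlim : Tendsto Q (𝓝[>] (0:ℝ)) (𝓝 0) := by
    have heq : ∀ y ∈ Set.Ioi (0:ℝ), (KK y / y) * Real.exp y = Q y := by
      intro y hy
      rw [hQdef]
      simp only
      rw [Real.exp_neg]
      field_simp
    have h2 : Tendsto (fun y => (KK y / y) * Real.exp y) (𝓝[>] (0:ℝ))
        (𝓝 (0 * Real.exp 0)) :=
      hslope.mul ((Real.continuous_exp.tendsto 0).mono_left nhdsWithin_le_nhds)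
    rw [zero_mul] at h2
    exact h2.congr' (eventually_nhdsWithin_of_forall heq)
  have hev : ∀ᶠ y in 𝓝[>] (0:ℝ), Q y = Q x := by
    filter_upwards [Ioo_mem_nhdsGT_of_mem (Set.mem_Ico.mpr ⟨le_refl 0, hx0⟩)]
    intro y hy
    exact (hconst y x hy.1 hy.2.le hx1).symm
  have hQx : Q x = 0 := by
    have h1 : Tendsto (fun _ : ℝ => Q x) (𝓝[>] (0:ℝ)) (𝓝 0) :=
      (tendsto_congr' hev).mp hQlim
    exact tendsto_nhds_unique tendsto_const_nhds h1
  have hxne : x * Real.exp (-x) ≠ 0 := mul_ne_zero (ne_of_gt hx0) (Real.exp_ne_zero _)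
  rw [hQdef] at hQx
  simp only at hQx
  exact (div_eq_zero_iff.mp hQx).resolve_right hxne

lemma HH_zero : HH 0 = 0 := by simp [HH]

lemma HH_lt_one : ∀ x : ℝ, 0 ≤ x → x < 1 → HH x < 1 := by
  intro x hx hx1
  by_contra hc
  push_neg at hc
  have hcont : ContinuousOn HH (Set.Icc 0 x) := fun y hy =>
    ((HH_hasDeriv hy.1 (lt_of_le_of_lt hy.2 hx1)).continuousAt).continuousWithinAt
  have hIVT := intermediate_value_Icc hx hcont
  have h1 : (1:ℝ) ∈ Set.Icc (HH 0) (HH x) := by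
    rw [HH_zero]; exact ⟨zero_le_one, hc⟩
  obtain ⟨y, hy, hHy⟩ := hIVT h1
  have hy1 : y < 1 := lt_of_le_of_lt hy.2 hx1
  have hKy := KK_eq_zero y hy.1 hy1
  rw [KK, hHy] at hKy
  have hlt := phi_lt hy.1 hy1
  rw [one_mul] at hKy
  linarith
lemma HH_eq (x : ℝ) (hx : 0 ≤ x) (hx1 : x < 1) : HH x = x := by
  have hK := KK_eq_zero x hx hx1
  have hmono : StrictMonoOn (fun t : ℝ => t * Real.exp (-t)) (Set.Icc 0 1) := by
    apply strictMonoOn_of_deriv_pos (convex_Icc 0 1)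
    · fun_prop
    · intro t ht
      rw [interior_Icc] at ht
      rw [(phi_deriv t).deriv]
      have h1 : 0 < 1 - t := by linarith [ht.2]
      positivity
  have hH0 : 0 ≤ HH x := mul_nonneg (phi_nonneg hx) (treeF_nonneg (phi_nonneg hx))
  have hH1 : HH x < 1 := HH_lt_one x hx hx1
  have hKey : HH x * Real.exp (-(HH x)) = x * Real.exp (-x) := by
    rw [KK] at hK; linarith
  exact hmono.injOn ⟨hH0, hH1.le⟩ ⟨hx, hx1.le⟩ hKey

lemma treeF_part1 (x : ℝ) (h0 : 0 ≤ x) (h1 : x < 1) :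
    treeF (x * Real.exp (-x)) = Real.exp x := by
  rcases eq_or_lt_of_le h0 with heq | hx0
  · rw [← heq]; norm_num [treeF_zero]
  have hH := HH_eq x h0 h1
  rw [HH] at hH
  have hne : x * Real.exp (-x) ≠ 0 := mul_ne_zero (ne_of_gt hx0) (Real.exp_ne_zero _)
  have h2 : treeF (x * Real.exp (-x)) = x / (x * Real.exp (-x)) := by
    rw [eq_div_iff hne]
    linarith [hH]
  rw [h2, Real.exp_neg]
  field_simp

/-- The tree function satisfies `F(x e^{-x}) = e^x` and `F'(x e^{-x}) = e^{2x}/(1-x)`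
for `0 ≤ x < 1`. -/
theorem treeF_eval (x : ℝ) (h0 : 0 ≤ x) (h1 : x < 1) :
    treeF (x * Real.exp (-x)) = Real.exp x ∧
      deriv treeF (x * Real.exp (-x)) = Real.exp (2 * x) / (1 - x) := by
  refine ⟨treeF_part1 x h0 h1, ?_⟩
  have hball := phi_abs h0 h1
  have hder : deriv treeF (x * Real.exp (-x)) = DD (x * Real.exp (-x)) :=
    (hasDerivAt_treeF _ hball).deriv
  rcases eq_or_lt_of_le h0 with heq | hx0
  · rw [← heq] at hder ⊢
    norm_num at hder ⊢
    rw [hder, DD_zero]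
  have hG : HasDerivAt (fun y => treeF (y * Real.exp (-y)))
      (DD (x * Real.exp (-x)) * (Real.exp (-x) * (1 - x))) x :=
    by have := (hasDerivAt_treeF _ hball).comp x (phi_deriv x); exact this
  have hev : (fun y => treeF (y * Real.exp (-y))) =ᶠ[𝓝 x] Real.exp := by
    filter_upwards [isOpen_Ioo.mem_nhds (Set.mem_Ioo.mpr ⟨hx0, h1⟩)]
    intro y hy
    exact treeF_part1 y hy.1.le hy.2
  have hG2 : HasDerivAt (fun y => treeF (y * Real.exp (-y))) (Real.exp x) x :=
    (Real.hasDerivAt_exp x).congr_of_eventuallyEq hev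
  have huniq : DD (x * Real.exp (-x)) * (Real.exp (-x) * (1 - x)) = Real.exp x :=
    hG.unique hG2
  rw [hder, eq_div_iff (by linarith : (1:ℝ) - x ≠ 0)]
  have he1 : Real.exp (-x) * Real.exp x = 1 := by rw [← Real.exp_add]; simp
  have he2 : Real.exp x * Real.exp x = Real.exp (2*x) := by rw [← Real.exp_add]; ring_nf
  linear_combination (Real.exp x) * huniq
    - (DD (x * Real.exp (-x)) * (1-x)) * he1 + he2
end
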